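/- arXiv:2010.01076 — 7 statements merged into one kernel-verified Lean document; each statement's English description precedes it below -/
import Mathlib

section
/- Under these hypotheses, the principal submatrix Y_LL is positive definite; the vector I_L^* := −Y_LS V_S is entrywise nonnegative and nonzero; and the vector V_L^* := Y_LL⁻¹ I_L^* has all entries positive. -/
open Matrix Set

noncomputable section

/-- `A` is irreducible: for every nonempty proper subset `α` of the index set,
the submatrix `A[α, αᶜ]` is not the zero matrix. -/
def IsIrred {k : ℕ} (A : Matrix (Fin k) (Fin k) ℝ) : Prop :=
  ∀ α : Finset (Fin k), α.Nonempty → α ≠ Finset.univ → ∃ i ∈ α, ∃ j ∈ αᶜ, A i j ≠ 0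

/-- `A` is a Z-matrix: off-diagonal entries are nonpositive. -/
def IsZmat {k : ℕ} (A : Matrix (Fin k) (Fin k) ℝ) : Prop :=
  ∀ i j, i ≠ j → A i j ≤ 0

/-- `A` is an M-matrix: a Z-matrix all of whose eigenvalues have nonnegative real part. -/
def IsMmat {k : ℕ} (A : Matrix (Fin k) (Fin k) ℝ) : Prop :=
  IsZmat A ∧ ∀ μ ∈ spectrum ℂ (A.map (Complex.ofReal)), 0 ≤ μ.re

/-- `A` is a nonsingular M-matrix: a Z-matrix all of whose eigenvalues have positive real part. -/
def IsNonsingMmat {k : ℕ} (A : Matrix (Fin k) (Fin k) ℝ) : Prop :=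
  IsZmat A ∧ ∀ μ ∈ spectrum ℂ (A.map (Complex.ofReal)), 0 < μ.re

/-- `P_c(x) = [x] Y (V* − x)`. -/
def Pc {k : ℕ} (Y : Matrix (Fin k) (Fin k) ℝ) (Vs : Fin k → ℝ) (x : Fin k → ℝ) : Fin k → ℝ :=
  Matrix.diagonal x *ᵥ (Y *ᵥ (Vs - x))

/-- Jacobian of `P_c` at `x`: `J(x) = [Y(V* − x)] − [x] Y`. -/
def Jmat {k : ℕ} (Y : Matrix (Fin k) (Fin k) ℝ) (Vs : Fin k → ℝ) (x : Fin k → ℝ) :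
    Matrix (Fin k) (Fin k) ℝ :=
  Matrix.diagonal (Y *ᵥ (Vs - x)) - Matrix.diagonal x * Y

/-- long-term voltage stable operating points. -/
def Dset {k : ℕ} (Y : Matrix (Fin k) (Fin k) ℝ) (Vs : Fin k → ℝ) : Set (Fin k → ℝ) :=
  {x | (∀ i, 0 < x i) ∧ IsUnit (Jmat Y Vs x).det ∧ ∀ i j, (Jmat Y Vs x)⁻¹ i j < 0}

/-- feasible power demands. -/
def Fset {k : ℕ} (Y : Matrix (Fin k) (Fin k) ℝ) (Vs : Fin k → ℝ) : Set (Fin k → ℝ) :=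
  {P | ∃ x, (∀ i, 0 < x i) ∧ Pc Y Vs x = P}

/-- `h(λ) = (1/2)([λ] Y + Y [λ])`. -/
def hmat {k : ℕ} (Y : Matrix (Fin k) (Fin k) ℝ) (l : Fin k → ℝ) : Matrix (Fin k) (Fin k) ℝ :=
  (1/2 : ℝ) • (Matrix.diagonal l * Y + Y * Matrix.diagonal l)

/-- `Λ₁ = {λ ∈ Λ : λ > 0, 1ᵀλ = 1}`. -/
def Lam1 {k : ℕ} (Y : Matrix (Fin k) (Fin k) ℝ) : Set (Fin k → ℝ) :=
  {l | (hmat Y l).PosDef ∧ (∀ i, 0 < l i) ∧ ∑ i, l i = 1}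

/-- `φ(λ) = (1/2) h(λ)⁻¹ [λ] I*` where `I* = Y V*`. -/
def phiv {k : ℕ} (Y : Matrix (Fin k) (Fin k) ℝ) (Vs : Fin k → ℝ) (l : Fin k → ℝ) : Fin k → ℝ :=
  (1/2 : ℝ) • ((hmat Y l)⁻¹ *ᵥ (Matrix.diagonal l *ᵥ (Y *ᵥ Vs)))

/-- `‖x‖_{h(λ)}²  = xᵀ h(λ) x`. -/
def qnorm {k : ℕ} (Y : Matrix (Fin k) (Fin k) ℝ) (l x : Fin k → ℝ) : ℝ :=
  x ⬝ᵥ (hmat Y l *ᵥ x)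

/-- The half-space `H_λ`. -/
def Hset {k : ℕ} (Y : Matrix (Fin k) (Fin k) ℝ) (Vs : Fin k → ℝ) (l : Fin k → ℝ) :
    Set (Fin k → ℝ) :=
  {y | l ⬝ᵥ y ≤ qnorm Y l (phiv Y Vs l)}

/-- The load-load block `Y_LL` of `Y`. -/
def blockLL (n m : ℕ) (Y : Matrix (Fin (n + m)) (Fin (n + m)) ℝ) : Matrix (Fin n) (Fin n) ℝ :=
  Matrix.of fun i j => Y (Fin.castAdd m i) (Fin.castAdd m j)

/-- The load-source block `Y_LS` of `Y`. -/
def blockLS (n m : ℕ) (Y : Matrix (Fin (n + m)) (Fin (n + m)) ℝ) : Matrix (Fin n) (Fin m) ℝ :=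
  Matrix.of fun i j => Y (Fin.castAdd m i) (Fin.natAdd n j)

/-- Total dissipated power `R(V_L, V_S) = (V_L; V_S)ᵀ Y (V_L; V_S)`. -/
def Rdiss (n m : ℕ) (Y : Matrix (Fin (n + m)) (Fin (n + m)) ℝ)
    (VS : Fin m → ℝ) (x : Fin n → ℝ) : ℝ :=
  Fin.append x VS ⬝ᵥ (Y *ᵥ Fin.append x VS)

/-!
A symmetric Z-matrix `Y` with zero row sums is the Laplacian of the weighted graph with edge
weights `-Y i j`, so `xᵀ Y x = ½ ∑ᵢⱼ (-Y i j) (x i - x j)²`. Irreducibility says this graph is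
connected. Hence `xᵀ Y x = 0` forces `x` to be constant, which is impossible for a nonzero `x`
vanishing on the sources: `Y_LL` is positive definite. The vector `z = (V_L*, V_S)` satisfies
`(Y z) i = 0` at every load `i`. If its minimum were `≤ 0`, it would be attained at a load, where
`(Y z) i = ∑ⱼ Y i j (z j - z i) = 0` forces the neighbours to share the minimum; by connectedness
`z` would be constant, contradicting `V_S > 0`.
-/

theorem IsIrred.forall_of_closed {k : ℕ} {A : Matrix (Fin k) (Fin k) ℝ} (hA : IsIrred A)
    {p : Fin k → Prop} {i₀ : Fin k} (hi₀ : p i₀) (hclosed : ∀ i j, p i → A i j ≠ 0 → p j) :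
    ∀ i, p i := by
  classical
  by_contra! ⟨i₁, hi₁⟩
  obtain ⟨i, hi, j, hj, hij⟩ := hA {i | p i} ⟨i₀, by simpa using hi₀⟩ fun h =>
    hi₁ (by simpa using h.ge (Finset.mem_univ i₁))
  simp only [Finset.mem_filter, Finset.mem_univ, true_and, Finset.mem_compl] at hi hj
  exact hj (hclosed i j hi hij)

section Laplacian

variable {k : ℕ} {Y : Matrix (Fin k) (Fin k) ℝ}

theorem dotProduct_mulVec_eq_half_sum_sq (hsym : Y.IsSymm) (hrow : ∀ i, ∑ j, Y i j = 0)
    (x : Fin k → ℝ) :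
    x ⬝ᵥ (Y *ᵥ x) = (1 / 2) * ∑ i, ∑ j, -Y i j * (x i - x j) ^ 2 := by
  have hcol : ∀ j, ∑ i, Y i j = 0 := fun j => by
    simpa only [hsym.apply] using hrow j
  have hexpand : ∀ i j, -Y i j * (x i - x j) ^ 2
      = -(Y i j * x i ^ 2) - Y i j * x j ^ 2 + 2 * (x i * (Y i j * x j)) := fun i j => by ring
  have hrow' : ∑ i, ∑ j, Y i j * x i ^ 2 = 0 := by
    simp [← Finset.sum_mul, hrow]
  have hcol' : ∑ i, ∑ j, Y i j * x j ^ 2 = 0 := by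
    rw [Finset.sum_comm]
    simp [← Finset.sum_mul, hcol]
  simp only [hexpand, Finset.sum_add_distrib, Finset.sum_sub_distrib, Finset.sum_neg_distrib,
    ← Finset.mul_sum, hrow', hcol']
  simp [dotProduct, mulVec, Finset.mul_sum]

theorem neg_mul_sq_sub_nonneg (hZ : IsZmat Y) (x : Fin k → ℝ) (i j : Fin k) :
    0 ≤ -Y i j * (x i - x j) ^ 2 := by
  rcases eq_or_ne i j with rfl | h
  · simp
  · exact mul_nonneg (neg_nonneg.mpr (hZ i j h)) (sq_nonneg _)

theorem dotProduct_mulVec_nonneg_of_isZmat (hsym : Y.IsSymm) (hZ : IsZmat Y)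
    (hrow : ∀ i, ∑ j, Y i j = 0) (x : Fin k → ℝ) : 0 ≤ x ⬝ᵥ (Y *ᵥ x) := by
  rw [dotProduct_mulVec_eq_half_sum_sq hsym hrow]
  exact mul_nonneg (by norm_num) (Finset.sum_nonneg fun i _ => Finset.sum_nonneg fun j _ =>
    neg_mul_sq_sub_nonneg hZ x i j)

theorem apply_eq_of_dotProduct_mulVec_eq_zero (hsym : Y.IsSymm) (hZ : IsZmat Y)
    (hrow : ∀ i, ∑ j, Y i j = 0) {x : Fin k → ℝ} (hx : x ⬝ᵥ (Y *ᵥ x) = 0) {i j : Fin k}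
    (hij : Y i j ≠ 0) : x i = x j := by
  rw [dotProduct_mulVec_eq_half_sum_sq hsym hrow] at hx
  have hsum : ∑ i, ∑ j, -Y i j * (x i - x j) ^ 2 = 0 := by linarith
  have hterm := (Finset.sum_eq_zero_iff_of_nonneg fun j _ => neg_mul_sq_sub_nonneg hZ x i j).mp
    ((Finset.sum_eq_zero_iff_of_nonneg fun i _ => Finset.sum_nonneg fun j _ =>
      neg_mul_sq_sub_nonneg hZ x i j).mp hsum i (Finset.mem_univ i)) j (Finset.mem_univ j)
  have := (mul_eq_zero.mp hterm).resolve_left (neg_ne_zero.mpr hij)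
  exact sub_eq_zero.mp (pow_eq_zero_iff two_ne_zero |>.mp this)

theorem dotProduct_mulVec_pos_of_apply_eq_zero (hsym : Y.IsSymm) (hZ : IsZmat Y)
    (hrow : ∀ i, ∑ j, Y i j = 0) (hirr : IsIrred Y) {x : Fin k → ℝ} (hx : x ≠ 0) {i₀ : Fin k}
    (hi₀ : x i₀ = 0) : 0 < x ⬝ᵥ (Y *ᵥ x) := by
  refine (dotProduct_mulVec_nonneg_of_isZmat hsym hZ hrow x).lt_of_ne fun h => hx ?_
  funext i
  exact hirr.forall_of_closed (p := fun i => x i = 0) hi₀ (fun i j hi hij =>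
    (apply_eq_of_dotProduct_mulVec_eq_zero hsym hZ hrow h.symm hij).symm.trans hi) i

theorem apply_eq_of_isMin_of_mulVec_nonneg (hZ : IsZmat Y) (hrow : ∀ i, ∑ j, Y i j = 0)
    {x : Fin k → ℝ} {i : Fin k} (hmin : ∀ j, x i ≤ x j) (hi : 0 ≤ (Y *ᵥ x) i) {j : Fin k}
    (hij : Y i j ≠ 0) : x j = x i := by
  have hterm : ∀ j ∈ Finset.univ, Y i j * (x j - x i) ≤ 0 := fun j _ => by
    rcases eq_or_ne i j with rfl | h
    · simp
    · exact mul_nonpos_of_nonpos_of_nonneg (hZ i j h) (sub_nonneg.mpr (hmin j))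
  have hsum : ∑ j, Y i j * (x j - x i) = (Y *ᵥ x) i := by
    simp [mul_sub, Finset.sum_sub_distrib, ← Finset.sum_mul, hrow, mulVec, dotProduct]
  have := (Finset.sum_eq_zero_iff_of_nonpos hterm).mp (le_antisymm (Finset.sum_nonpos hterm)
    (hsum ▸ hi)) j (Finset.mem_univ j)
  exact sub_eq_zero.mp ((mul_eq_zero.mp this).resolve_left hij)

theorem pos_of_mulVec_nonneg_of_nonpos (hZ : IsZmat Y) (hrow : ∀ i, ∑ j, Y i j = 0)
    (hirr : IsIrred Y) {x : Fin k → ℝ} (hx : ∀ i, x i ≤ 0 → 0 ≤ (Y *ᵥ x) i) {i₀ : Fin k}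
    (hi₀ : 0 < x i₀) (i : Fin k) : 0 < x i := by
  have : Nonempty (Fin k) := ⟨i₀⟩
  obtain ⟨imin, hmin⟩ := Finite.exists_min x
  by_contra! hi
  have hc : x imin ≤ 0 := (hmin i).trans hi
  have hall := hirr.forall_of_closed (p := fun j => x j = x imin) rfl fun j l hj hjl =>
    (apply_eq_of_isMin_of_mulVec_nonneg hZ hrow (hj ▸ hmin) (hx j (hj ▸ hc)) hjl).trans hj
  linarith [hall i₀]

end Laplacian

section Blocks

variable {n m : ℕ} (Y : Matrix (Fin (n + m)) (Fin (n + m)) ℝ)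

theorem mulVec_append_castAdd (x : Fin n → ℝ) (y : Fin m → ℝ) (i : Fin n) :
    (Y *ᵥ Fin.append x y) (Fin.castAdd m i) = (blockLL n m Y *ᵥ x) i + (blockLS n m Y *ᵥ y) i := by
  simp [mulVec, dotProduct, Fin.sum_univ_add, blockLL, blockLS]

theorem dotProduct_mulVec_append_zero (x : Fin n → ℝ) :
    Fin.append x 0 ⬝ᵥ (Y *ᵥ Fin.append x 0) = x ⬝ᵥ (blockLL n m Y *ᵥ x) := by
  simp [dotProduct, Fin.sum_univ_add, mulVec_append_castAdd]

theorem blockLS_nonpos (hZ : IsZmat Y) (i : Fin n) (j : Fin m) : blockLS n m Y i j ≤ 0 :=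
  hZ _ _ (Fin.ne_of_val_ne (by simp; omega))

variable {Y}

theorem posDef_blockLL (hm : 0 < m) (hsym : Y.IsSymm) (hZ : IsZmat Y)
    (hrow : ∀ i, ∑ j, Y i j = 0) (hirr : IsIrred Y) : (blockLL n m Y).PosDef := by
  refine .of_dotProduct_mulVec_pos (funext₂ fun i j => hsym.apply _ _) fun x hx => ?_
  rw [star_trivial, ← dotProduct_mulVec_append_zero]
  refine dotProduct_mulVec_pos_of_apply_eq_zero hsym hZ hrow hirr (fun h => hx ?_)
    (i₀ := Fin.natAdd n ⟨0, hm⟩) (Fin.append_right x 0 _)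
  funext i
  simpa using congrFun h (Fin.castAdd m i)

theorem neg_blockLS_mulVec_nonneg (hZ : IsZmat Y) {VS : Fin m → ℝ} (hVS : ∀ j, 0 ≤ VS j)
    (i : Fin n) : 0 ≤ (-(blockLS n m Y *ᵥ VS)) i := by
  simp only [Pi.neg_apply, mulVec, dotProduct, neg_nonneg]
  exact Finset.sum_nonpos fun j _ =>
    mul_nonpos_of_nonpos_of_nonneg (blockLS_nonpos Y hZ i j) (hVS j)

theorem neg_blockLS_mulVec_ne_zero (hn : 0 < n) (hm : 0 < m) (hZ : IsZmat Y) (hirr : IsIrred Y)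
    {VS : Fin m → ℝ} (hVS : ∀ j, 0 < VS j) : -(blockLS n m Y *ᵥ VS) ≠ 0 := by
  intro h
  have hLS : ∀ i j, blockLS n m Y i j = 0 := fun i j => by
    have hsum : ∑ j, blockLS n m Y i j * VS j = 0 := by
      simpa [mulVec, dotProduct] using congrFun h i
    have := (Finset.sum_eq_zero_iff_of_nonpos fun j _ =>
      mul_nonpos_of_nonpos_of_nonneg (blockLS_nonpos Y hZ i j) (hVS j).le).mp hsum j
      (Finset.mem_univ j)
    exact (mul_eq_zero.mp this).resolve_right (hVS j).ne'
  -- with no load–source coupling, the loads would form a closed set of indices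
  have hall := hirr.forall_of_closed (p := fun i => (i : ℕ) < n) (i₀ := Fin.castAdd m ⟨0, hn⟩)
    (by simpa using hn) fun i j hi hij => by
      by_contra hj
      obtain ⟨j, rfl⟩ : ∃ j', j = Fin.natAdd n j' := ⟨⟨j - n, by omega⟩, Fin.ext (by simp; omega)⟩
      exact hij (hLS ⟨i, hi⟩ j)
  simpa using hall (Fin.natAdd n ⟨0, hm⟩)

theorem blockLL_inv_mulVec_pos (hm : 0 < m) (hZ : IsZmat Y) (hrow : ∀ i, ∑ j, Y i j = 0)
    (hirr : IsIrred Y) (hdet : IsUnit (blockLL n m Y).det) {VS : Fin m → ℝ}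
    (hVS : ∀ j, 0 < VS j) (i : Fin n) :
    0 < ((blockLL n m Y)⁻¹ *ᵥ (-(blockLS n m Y *ᵥ VS))) i := by
  set VL := (blockLL n m Y)⁻¹ *ᵥ (-(blockLS n m Y *ᵥ VS))
  have hload : ∀ i, (Y *ᵥ Fin.append VL VS) (Fin.castAdd m i) = 0 := fun i => by
    rw [mulVec_append_castAdd, mulVec_mulVec, mul_nonsing_inv _ hdet, one_mulVec]
    simp
  have hharm : ∀ j, Fin.append VL VS j ≤ 0 → 0 ≤ (Y *ᵥ Fin.append VL VS) j := by
    refine Fin.addCases (fun i _ => (hload i).ge) fun j hj => ?_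
    exact absurd hj (by simpa using hVS j)
  simpa using pos_of_mulVec_nonneg_of_nonpos hZ hrow hirr hharm
    (i₀ := Fin.natAdd n ⟨0, hm⟩) ((Fin.append_right VL VS _).symm ▸ hVS _) (Fin.castAdd m i)

end Blocks

theorem stmt_0 (n m : ℕ) (hn : 1 ≤ n) (hm : 1 ≤ m)
    (Y : Matrix (Fin (n + m)) (Fin (n + m)) ℝ)
    (hsym : Y.IsSymm)
    (hZ : IsZmat Y)
    (hrow : Y *ᵥ (fun _ => (1 : ℝ)) = 0)
    (hirr : IsIrred Y)
    (VS : Fin m → ℝ) (hVS : ∀ i, 0 < VS i) :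
    (blockLL n m Y).PosDef ∧
    (∀ i, 0 ≤ (-(blockLS n m Y *ᵥ VS)) i) ∧
    (-(blockLS n m Y *ᵥ VS)) ≠ 0 ∧
    (∀ i, 0 < ((blockLL n m Y)⁻¹ *ᵥ (-(blockLS n m Y *ᵥ VS))) i) := by
  have hrow' : ∀ i, ∑ j, Y i j = 0 := fun i => by
    simpa [mulVec, dotProduct] using congrFun hrow i
  have hpd := posDef_blockLL hm hsym hZ hrow' hirr
  exact ⟨hpd, neg_blockLS_mulVec_nonneg hZ fun j => (hVS j).le,
    neg_blockLS_mulVec_ne_zero hn hm hZ hirr hVS,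
    blockLL_inv_mulVec_pos hm hZ hrow' hirr (isUnit_iff_ne_zero.mpr hpd.det_pos.ne') hVS⟩
end
end

section
/- Let P ∈ ℝⁿ be such that an operating point for P exists, and let x̃ be an operating point for P. Then R(x̃, V_S) ≤ R(x, V_S) for every operating point x for P if and only if x̃ᵀ I_L^* ≥ xᵀ I_L^* for every operating point x for P. -/
open Matrix Set

noncomputable section

private lemma rdiss_split (n m : ℕ) (Y : Matrix (Fin (n + m)) (Fin (n + m)) ℝ)
    (hsym : Y.IsSymm) (VS : Fin m → ℝ) (x : Fin n → ℝ) :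
    Rdiss n m Y VS x =
      x ⬝ᵥ (blockLL n m Y *ᵥ x) + 2 * (x ⬝ᵥ (blockLS n m Y *ᵥ VS)) + Rdiss n m Y VS 0 := by
  have h : Fin.append x VS = Fin.append x 0 + Fin.append (0 : Fin n → ℝ) VS := by
    funext i
    induction i using Fin.addCases <;> simp
  have hswap : Fin.append (0 : Fin n → ℝ) VS ⬝ᵥ (Y *ᵥ Fin.append x 0)
      = Fin.append x 0 ⬝ᵥ (Y *ᵥ Fin.append (0 : Fin n → ℝ) VS) := by
    rw [Matrix.dotProduct_mulVec, ← Matrix.mulVec_transpose, hsym.eq, dotProduct_comm]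
  have h1 : Fin.append x (0 : Fin m → ℝ) ⬝ᵥ (Y *ᵥ Fin.append x 0)
      = x ⬝ᵥ (blockLL n m Y *ᵥ x) := by
    simp [dotProduct, mulVec, Fin.sum_univ_add, blockLL, Finset.mul_sum]
  have h2 : Fin.append x (0 : Fin m → ℝ) ⬝ᵥ (Y *ᵥ Fin.append (0 : Fin n → ℝ) VS)
      = x ⬝ᵥ (blockLS n m Y *ᵥ VS) := by
    simp [dotProduct, mulVec, Fin.sum_univ_add, blockLS, Finset.mul_sum]
  unfold Rdiss
  rw [h]
  simp only [Matrix.mulVec_add, dotProduct_add, add_dotProduct, hswap, h1, h2]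
  ring

theorem stmt_1 (n m : ℕ) (hn : 1 ≤ n) (hm : 1 ≤ m)
    (Y : Matrix (Fin (n + m)) (Fin (n + m)) ℝ)
    (hsym : Y.IsSymm)
    (hZ : IsZmat Y)
    (hrow : Y *ᵥ (fun _ => (1 : ℝ)) = 0)
    (hirr : IsIrred Y)
    (VS : Fin m → ℝ) (hVS : ∀ i, 0 < VS i)
    (hPD : (blockLL n m Y).PosDef)
    -- I_L^* := −Y_LS V_S and V_L^* := Y_LL⁻¹ I_L^*
    (Istar : Fin n → ℝ) (hIstar : Istar = -(blockLS n m Y *ᵥ VS))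
    (VLstar : Fin n → ℝ) (hVLstar : VLstar = (blockLL n m Y)⁻¹ *ᵥ Istar)
    (P : Fin n → ℝ)
    (hfeas : ∃ x, (∀ i, 0 < x i) ∧ Pc (blockLL n m Y) VLstar x = P)
    (xt : Fin n → ℝ)
    (hxt : (∀ i, 0 < xt i) ∧ Pc (blockLL n m Y) VLstar xt = P) :
    (∀ x, (∀ i, 0 < x i) → Pc (blockLL n m Y) VLstar x = P →
        Rdiss n m Y VS xt ≤ Rdiss n m Y VS x) ↔
    (∀ x, (∀ i, 0 < x i) → Pc (blockLL n m Y) VLstar x = P →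
        x ⬝ᵥ Istar ≤ xt ⬝ᵥ Istar) := by
  obtain ⟨hxtpos, hxtP⟩ := hxt
  -- For every operating point, Rdiss is an affine function of x ⬝ᵥ Istar.
  have key : ∀ x : Fin n → ℝ, Pc (blockLL n m Y) VLstar x = P →
      Rdiss n m Y VS x = Rdiss n m Y VS 0 - (∑ i, P i) - x ⬝ᵥ Istar := by
    intro x hx
    have hinv : IsUnit (blockLL n m Y).det := isUnit_iff_ne_zero.2 hPD.det_pos.ne'
    have hLLV : blockLL n m Y *ᵥ VLstar = Istar := by
      rw [hVLstar, Matrix.mulVec_mulVec, Matrix.mul_nonsing_inv _ hinv, Matrix.one_mulVec]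
    have hsumP : ∑ i, P i = x ⬝ᵥ Istar - x ⬝ᵥ (blockLL n m Y *ᵥ x) := by
      have hPi : ∀ i, P i = x i * (blockLL n m Y *ᵥ (VLstar - x)) i := by
        intro i
        have : Pc (blockLL n m Y) VLstar x i = P i := by rw [hx]
        rw [← this]
        simp [Pc, Matrix.mulVec_diagonal, mulVec, dotProduct, Matrix.diagonal_apply, Finset.mul_sum]
      calc ∑ i, P i = x ⬝ᵥ (blockLL n m Y *ᵥ (VLstar - x)) := by
            simp only [dotProduct]
            exact Finset.sum_congr rfl fun i _ => hPi i
        _ = x ⬝ᵥ Istar - x ⬝ᵥ (blockLL n m Y *ᵥ x) := by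
            rw [Matrix.mulVec_sub, dotProduct_sub, hLLV]
    have hx2 : x ⬝ᵥ (blockLS n m Y *ᵥ VS) = -(x ⬝ᵥ Istar) := by
      simp [hIstar]
    rw [rdiss_split n m Y hsym VS x, hx2, hsumP]
    ring
  constructor
  · intro h x hxpos hxP
    have := h x hxpos hxP
    rw [key xt hxtP, key x hxP] at this
    linarith
  · intro h x hxpos hxP
    have := h x hxpos hxP
    rw [key xt hxtP, key x hxP]
    linarith
end
end

section
/- Define P_max := (1/4)[V_L^*] I_L^*. Then P_max ≥ 0 entrywise and P_max ≠ 0; P_max is feasible with (1/2)V_L^* as an operating point, and 1ᵀ P_max = (1/4) V_L^*ᵀ Y_LL V_L^*. For every feasible P one has 1ᵀ P ≤ 1ᵀ P_max, with equality if and only if P = P_max; and the only operating point for P_max is (1/2)V_L^*. -/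
open Matrix Set

noncomputable section

/-
The total demand `1ᵀ P_c(x) = xᵀ Y (V* − x)` is a concave quadratic in `x`; completing the square
gives `xᵀ Y (V* − x) = ¼ V*ᵀ Y V* − (x − ½V*)ᵀ Y (x − ½V*)`. Since `Y` is positive definite, the
total demand is maximised exactly at `x = ½V*`, where `P_c(½V*) = ¼ [V*] I*`.
-/

lemma sum_Pc {k : ℕ} (Y : Matrix (Fin k) (Fin k) ℝ) (Vs x : Fin k → ℝ) :
    ∑ i, Pc Y Vs x i = x ⬝ᵥ (Y *ᵥ (Vs - x)) := by
  simp [Pc, dotProduct, mulVec_diagonal]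

lemma Pc_half {k : ℕ} (Y : Matrix (Fin k) (Fin k) ℝ) (Vs : Fin k → ℝ) :
    Pc Y Vs ((1/2 : ℝ) • Vs) = (1/4 : ℝ) • (diagonal Vs *ᵥ (Y *ᵥ Vs)) := by
  have hhalf : Vs - (1/2 : ℝ) • Vs = (1/2 : ℝ) • Vs := by
    rw [sub_eq_iff_eq_add, ← add_smul]; norm_num
  ext i
  simp only [Pc, hhalf, mulVec_diagonal, mulVec_smul, Pi.smul_apply, smul_eq_mul]
  ring

lemma dotProduct_mulVec_sub_eq_sub_sq {ι : Type*} [Fintype ι] {Y : Matrix ι ι ℝ}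
    (hY : Y.IsSymm) (v x : ι → ℝ) :
    x ⬝ᵥ (Y *ᵥ (v - x)) =
      (1/4 : ℝ) * (v ⬝ᵥ (Y *ᵥ v)) - (x - (1/2 : ℝ) • v) ⬝ᵥ (Y *ᵥ (x - (1/2 : ℝ) • v)) := by
  have hsymm : v ⬝ᵥ (Y *ᵥ x) = x ⬝ᵥ (Y *ᵥ v) := by
    rw [dotProduct_mulVec, ← mulVec_transpose, hY.eq, dotProduct_comm]
  simp only [mulVec_sub, dotProduct_sub, sub_dotProduct, mulVec_smul, dotProduct_smul,
    smul_dotProduct, smul_eq_mul, hsymm]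
  ring

section PosDef

variable {k : ℕ} {Y : Matrix (Fin k) (Fin k) ℝ}

lemma sum_Pc_le (hY : Y.PosDef) (Vs x : Fin k → ℝ) :
    ∑ i, Pc Y Vs x i ≤ (1/4 : ℝ) * (Vs ⬝ᵥ (Y *ᵥ Vs)) := by
  rw [sum_Pc, dotProduct_mulVec_sub_eq_sub_sq (isHermitian_iff_isSymm.mp hY.isHermitian)]
  have := hY.posSemidef.dotProduct_mulVec_nonneg (x - (1/2 : ℝ) • Vs)
  simp only [star_trivial] at this
  linarith

lemma sum_Pc_eq_iff (hY : Y.PosDef) (Vs x : Fin k → ℝ) :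
    ∑ i, Pc Y Vs x i = (1/4 : ℝ) * (Vs ⬝ᵥ (Y *ᵥ Vs)) ↔ x = (1/2 : ℝ) • Vs := by
  rw [sum_Pc, dotProduct_mulVec_sub_eq_sub_sq (isHermitian_iff_isSymm.mp hY.isHermitian)]
  constructor
  · intro h
    by_contra hne
    have := hY.dotProduct_mulVec_pos (sub_ne_zero.mpr hne)
    simp only [star_trivial] at this
    linarith
  · rintro rfl
    simp

end PosDef

theorem stmt_3_general (n : ℕ)
    (Y : Matrix (Fin n) (Fin n) ℝ)
    (hPD : Y.PosDef)
    (Vs : Fin n → ℝ) (hVs : ∀ i, 0 < Vs i)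
    (hInn : ∀ i, 0 ≤ (Y *ᵥ Vs) i) (hIne : Y *ᵥ Vs ≠ 0)
    (Pmax : Fin n → ℝ) (hPmax : Pmax = (1/4 : ℝ) • (Matrix.diagonal Vs *ᵥ (Y *ᵥ Vs))) :
    (∀ i, 0 ≤ Pmax i) ∧ Pmax ≠ 0 ∧
    Pc Y Vs ((1/2 : ℝ) • Vs) = Pmax ∧ Pmax ∈ Fset Y Vs ∧
    (∑ i, Pmax i) = (1/4 : ℝ) * (Vs ⬝ᵥ (Y *ᵥ Vs)) ∧
    (∀ P ∈ Fset Y Vs, ∑ i, P i ≤ ∑ i, Pmax i) ∧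
    (∀ P ∈ Fset Y Vs, ((∑ i, P i) = (∑ i, Pmax i) ↔ P = Pmax)) ∧
    (∀ x, (∀ i, 0 < x i) → Pc Y Vs x = Pmax → x = (1/2 : ℝ) • Vs) := by
  have hPc : Pc Y Vs ((1/2 : ℝ) • Vs) = Pmax := hPmax ▸ Pc_half Y Vs
  have hsum : ∑ i, Pmax i = (1/4 : ℝ) * (Vs ⬝ᵥ (Y *ᵥ Vs)) := by
    rw [← hPc, sum_Pc_eq_iff hPD]
  have huniq (x : Fin n → ℝ) (hx : Pc Y Vs x = Pmax) : x = (1/2 : ℝ) • Vs :=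
    (sum_Pc_eq_iff hPD Vs x).1 (hx ▸ hsum)
  have hPmax_apply (i : Fin n) : Pmax i = (1/4 : ℝ) * (Vs i * (Y *ᵥ Vs) i) := by
    simp only [hPmax, Pi.smul_apply, mulVec_diagonal, smul_eq_mul]
  refine ⟨fun i => ?_, fun h0 => hIne ?_, hPc, ⟨_, fun i => by simp [hVs i], hPc⟩, hsum,
    ?_, ?_, fun x _ => huniq x⟩
  · rw [hPmax_apply]
    exact mul_nonneg (by norm_num) (mul_nonneg (hVs i).le (hInn i))
  · ext i
    simpa [hPmax_apply, (hVs i).ne'] using congrFun h0 i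
  · rintro _ ⟨x, -, rfl⟩
    exact hsum ▸ sum_Pc_le hPD Vs x
  · rintro _ ⟨x, -, rfl⟩
    exact ⟨fun h => by rw [(sum_Pc_eq_iff hPD Vs x).1 (h.trans hsum), hPc], fun h => h ▸ rfl⟩

theorem stmt_3 (n : ℕ) (hn : 1 ≤ n)
    (Y : Matrix (Fin n) (Fin n) ℝ)
    (hPD : Y.PosDef)
    (hZ : IsZmat Y)
    (hirr : IsIrred Y)
    (Vs : Fin n → ℝ) (hVs : ∀ i, 0 < Vs i)
    (hInn : ∀ i, 0 ≤ (Y *ᵥ Vs) i) (hIne : Y *ᵥ Vs ≠ 0)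
    (Pmax : Fin n → ℝ) (hPmax : Pmax = (1/4 : ℝ) • (Matrix.diagonal Vs *ᵥ (Y *ᵥ Vs))) :
    (∀ i, 0 ≤ Pmax i) ∧ Pmax ≠ 0 ∧
    Pc Y Vs ((1/2 : ℝ) • Vs) = Pmax ∧ Pmax ∈ Fset Y Vs ∧
    (∑ i, Pmax i) = (1/4 : ℝ) * (Vs ⬝ᵥ (Y *ᵥ Vs)) ∧
    (∀ P ∈ Fset Y Vs, ∑ i, P i ≤ ∑ i, Pmax i) ∧
    (∀ P ∈ Fset Y Vs, ((∑ i, P i) = (∑ i, Pmax i) ↔ P = Pmax)) ∧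
    (∀ x, (∀ i, 0 < x i) → Pc Y Vs x = Pmax → x = (1/2 : ℝ) • Vs) :=
  stmt_3_general n Y hPD Vs hVs hInn hIne Pmax hPmax
end
end

section
/- Assume n ≥ 2. For every x ∈ ℝⁿ, the matrix −J(x) = [x] Y_LL − [Y_LL(V_L^* − x)] is an irreducible Z-matrix (nonpositive off-diagonal entries, and for every nonempty proper subset α of {1,…,n} the submatrix indexed by α×αᶜ is not zero) if and only if x has all entries positive. Moreover, the map x ↦ J(x) is injective on the set {x ∈ ℝⁿ : x has all entries positive}. -/
open Matrix Set

noncomputable section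

theorem stmt_4 (n : ℕ) (hn : 1 ≤ n)
    (Y : Matrix (Fin n) (Fin n) ℝ)
    (hPD : Y.PosDef)
    (hZ : IsZmat Y)
    (hirr : IsIrred Y)
    (Vs : Fin n → ℝ) (hVs : ∀ i, 0 < Vs i)
    (hInn : ∀ i, 0 ≤ (Y *ᵥ Vs) i) (hIne : Y *ᵥ Vs ≠ 0)
    (hn2 : 2 ≤ n) :
    (∀ x : Fin n → ℝ,
      (IsZmat (-(Jmat Y Vs x)) ∧ IsIrred (-(Jmat Y Vs x))) ↔ (∀ i, 0 < x i)) ∧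
    Set.InjOn (Jmat Y Vs) {x | ∀ i, 0 < x i} := by
  have hJoff : ∀ (x : Fin n → ℝ) (i j : Fin n), i ≠ j →
      (-(Jmat Y Vs x)) i j = x i * Y i j := by
    intro x i j hij
    simp [Jmat, Matrix.diagonal_apply_ne _ hij, Matrix.diagonal_mul]
  haveI : Nontrivial (Fin n) := Fin.nontrivial_iff_two_le.mpr hn2
  have hrow : ∀ i : Fin n, ∃ j, j ≠ i ∧ Y i j ≠ 0 := by
    intro i
    obtain ⟨j0, hj0⟩ := exists_ne i
    have hne : ({i} : Finset (Fin n)) ≠ Finset.univ := by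
      intro h
      have := Finset.mem_univ j0
      rw [← h, Finset.mem_singleton] at this
      exact hj0 this
    obtain ⟨a, ha, j, hj, hYaj⟩ := hirr {i} ⟨i, Finset.mem_singleton_self i⟩ hne
    rw [Finset.mem_singleton] at ha
    subst ha
    rw [Finset.mem_compl, Finset.mem_singleton] at hj
    exact ⟨j, hj, hYaj⟩
  constructor
  · intro x
    constructor
    · rintro ⟨hZx, hIx⟩ i
      obtain ⟨j, hj, hYij⟩ := hrow i
      have hij : i ≠ j := fun h => hj h.symm
      have hYneg : Y i j < 0 := lt_of_le_of_ne (hZ i j hij) hYij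
      have h1 : x i * Y i j ≤ 0 := by
        have := hZx i j hij; rwa [hJoff x i j hij] at this
      have hge : (0 : ℝ) ≤ x i := by nlinarith
      have hne : ({i} : Finset (Fin n)) ≠ Finset.univ := by
        obtain ⟨j0, hj0⟩ := exists_ne i
        intro h
        have := Finset.mem_univ j0
        rw [← h, Finset.mem_singleton] at this
        exact hj0 this
      obtain ⟨a, ha, b, hb, hab⟩ := hIx {i} ⟨i, Finset.mem_singleton_self i⟩ hne
      rw [Finset.mem_singleton] at ha
      subst ha
      rw [Finset.mem_compl, Finset.mem_singleton] at hb
      have hab' : a ≠ b := fun h => hb h.symm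
      rw [hJoff x a b hab'] at hab
      have hxne : x a ≠ 0 := fun h => hab (by rw [h, zero_mul])
      exact lt_of_le_of_ne hge (Ne.symm hxne)
    · intro hx
      constructor
      · intro i j hij
        rw [hJoff x i j hij]
        exact mul_nonpos_of_nonneg_of_nonpos (hx i).le (hZ i j hij)
      · intro α hne hnu
        obtain ⟨i, hi, j, hj, hY⟩ := hirr α hne hnu
        refine ⟨i, hi, j, hj, ?_⟩
        have hij : i ≠ j := by
          intro h; subst h
          exact (Finset.mem_compl.mp hj) hi
        rw [hJoff x i j hij]
        exact mul_ne_zero (ne_of_gt (hx i)) hY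
  · intro x hx y hy heq
    funext i
    obtain ⟨j, hj, hYij⟩ := hrow i
    have hij : i ≠ j := fun h => hj h.symm
    have h1 : (-(Jmat Y Vs x)) i j = (-(Jmat Y Vs y)) i j := by rw [heq]
    rw [hJoff x i j hij, hJoff y i j hij] at h1
    exact mul_right_cancel₀ hYij h1
end
end

section
/- There exists a real eigenvalue r of A (the Perron root) such that every eigenvalue μ of A with μ ≠ r satisfies Re(μ) > r; r is a simple eigenvalue of A (algebraic multiplicity one); there exists an eigenvector of A for r with all entries positive; and any two eigenvectors of A for the eigenvalue r are scalar multiples of each other. -/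
open Matrix Set

noncomputable section

/-!
Write `A = s • 1 - B` with `B ≥ 0` irreducible and let `ρ` be the spectral radius of `B`; then
`r = s - ρ`, and everything reduces to Perron–Frobenius for `B`.

The key fact is that a nonnegative `u ≠ 0` with `ρ u ≤ B u` is a positive eigenvector. Otherwise
the entrywise positive matrix `(1 + B) ^ (n - 1)` turns the slack into `w > 0` with
`(ρ + ε) w ≤ B w`, so `‖B ^ k‖ ≥ (ρ + ε) ^ k`, contradicting Gelfand's formula. It applies to the
moduli `|z|` of an eigenvector for an eigenvalue of modulus `ρ`, and to a difference of two
eigenvectors for `ρ` vanishing at one coordinate, giving existence and uniqueness of the positive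
eigenvector. The root is simple because the positive left and right eigenvectors are not
orthogonal, which rules out a Jordan chain. An eigenvalue `μ ≠ r` of `A` has `‖s - μ‖ ≤ ρ` and
`s - μ ≠ ρ`, so `Re μ > r`.
-/

open Filter
open scoped NNReal ENNReal

attribute [local instance] Matrix.linftyOpNormedAddCommGroup Matrix.linftyOpNormedRing
  Matrix.linftyOpNormedAlgebra

theorem exists_pos_smul_le {ι : Type*} [Finite ι] {w x : ι → ℝ} (hw : ∀ i, 0 < w i)
    (hx : ∀ i, 0 < x i) : ∃ ε : ℝ, 0 < ε ∧ ε • w ≤ x := by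
  cases isEmpty_or_nonempty ι
  · exact ⟨1, one_pos, fun i => isEmptyElim i⟩
  obtain ⟨i, hi⟩ := Finite.exists_min fun i => x i / w i
  exact ⟨x i / w i, div_pos (hx i) (hw i), fun j => (le_div_iff₀ (hw j)).1 (hi j)⟩

theorem pow_mulVec_of_mulVec_eq_smul {R ι : Type*} [CommSemiring R] [Fintype ι] [DecidableEq ι]
    {M : Matrix ι ι R} {c : R} {v : ι → R} (h : M *ᵥ v = c • v) (k : ℕ) :
    (M ^ k) *ᵥ v = c ^ k • v := by
  induction k with
  | zero => simp
  | succ k ih => rw [pow_succ', ← mulVec_mulVec, ih, mulVec_smul, h, smul_smul, pow_succ]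

theorem smul_one_sub_mulVec_eq_smul_iff {R ι : Type*} [CommRing R] [Fintype ι] [DecidableEq ι]
    (N : Matrix ι ι R) (s μ : R) (v : ι → R) :
    (s • 1 - N) *ᵥ v = (s - μ) • v ↔ N *ᵥ v = μ • v := by
  rw [sub_mulVec, smul_mulVec, one_mulVec, sub_smul, sub_right_inj]

theorem mem_spectrum_iff_exists_mulVec_eq_smul {K ι : Type*} [Field K] [Fintype ι]
    [DecidableEq ι] {M : Matrix ι ι K} {μ : K} :
    μ ∈ spectrum K M ↔ ∃ v ≠ 0, M *ᵥ v = μ • v := by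
  rw [← spectrum_toLin', ← Module.End.hasEigenvalue_iff_mem_spectrum,
    Module.End.hasEigenvalue_iff, Submodule.ne_bot_iff]
  simp [and_comm]

theorem sub_mem_spectrum_smul_one_sub_iff {K ι : Type*} [Field K] [Fintype ι] [DecidableEq ι]
    (N : Matrix ι ι K) (s μ : K) : s - μ ∈ spectrum K (s • 1 - N) ↔ μ ∈ spectrum K N := by
  simp only [mem_spectrum_iff_exists_mulVec_eq_smul, smul_one_sub_mulVec_eq_smul_iff]

theorem spectrum_transpose {K ι : Type*} [Field K] [Fintype ι] [DecidableEq ι]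
    (M : Matrix ι ι K) : spectrum K Mᵀ = spectrum K M :=
  Set.ext fun _ => by
    rw [mem_spectrum_iff_isRoot_charpoly, mem_spectrum_iff_isRoot_charpoly, charpoly_transpose]

theorem rootMultiplicity_charpoly_eq_one {K ι : Type*} [Field K] [Fintype ι] [DecidableEq ι]
    {M : Matrix ι ι K} {r : K} {u q : ι → K} (hu : M *ᵥ u = r • u) (hq : q ᵥ* M = r • q)
    (hqu : q ⬝ᵥ u ≠ 0) (huniq : ∀ z, M *ᵥ z = r • z → ∃ c : K, z = c • u) :
    M.charpoly.rootMultiplicity r = 1 := by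
  have hu0 : u ≠ 0 := by rintro rfl; simp at hqu
  -- `q` annihilates the range of `M - r`, so no Jordan chain starts at `u`.
  have hgen : ∀ k x, ((M.toLin' - r • 1 : Module.End K (ι → K)) ^ k) x = 0 → x ∈ K ∙ u := by
    intro k
    induction k with
    | zero => simp
    | succ k ih =>
      intro x hx
      rw [pow_succ, Module.End.mul_apply] at hx
      obtain ⟨c, hc⟩ := Submodule.mem_span_singleton.1 (ih _ hx)
      have hc0 : c = 0 := by
        have : q ⬝ᵥ (c • u) = 0 := by
          simp [hc, dotProduct_sub, dotProduct_mulVec, hq]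
        simpa [hqu] using this
      obtain ⟨d, hd⟩ := huniq x (by simpa [hc0, sub_eq_zero] using hc.symm)
      exact Submodule.mem_span_singleton.2 ⟨d, hd.symm⟩
  have hmax : Module.End.maxGenEigenspace M.toLin' r = K ∙ u := by
    refine le_antisymm (fun x hx => ?_) ?_
    · obtain ⟨k, hk⟩ := (Module.End.mem_maxGenEigenspace _ _ _).1 hx
      exact hgen k x hk
    · rw [Submodule.span_singleton_le_iff_mem, Module.End.mem_maxGenEigenspace]
      exact ⟨1, by simp [hu]⟩
  rw [← charpoly_toLin', ← LinearMap.finrank_maxGenEigenspace_eq, hmax, finrank_span_singleton hu0]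

theorem Complex.re_lt_of_norm_le_of_ne {z : ℂ} {ρ : ℝ} (h : ‖z‖ ≤ ρ) (hne : z ≠ ρ) : z.re < ρ := by
  by_cases him : z.im = 0
  · refine lt_of_le_of_ne ((Complex.re_le_norm z).trans h) fun hre => hne ?_
    exact Complex.ext (by simp [hre]) (by simp [him])
  · exact ((le_abs_self _).trans_lt (Complex.abs_re_lt_norm.2 him)).trans_le h

theorem le_spectralRadius_of_pow_le_nnnorm {A : Type*} [NormedRing A] [NormedAlgebra ℂ A]
    [CompleteSpace A] {a : A} {s : ℝ≥0} (h : ∀ k : ℕ, s ^ k ≤ ‖a ^ k‖₊) :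
    (s : ℝ≥0∞) ≤ spectralRadius ℂ a := by
  refine ge_of_tendsto (spectrum.pow_nnnorm_pow_one_div_tendsto_nhds_spectralRadius a) ?_
  filter_upwards [eventually_ne_atTop 0] with k hk
  calc (s : ℝ≥0∞) = ((s : ℝ≥0∞) ^ k) ^ (1 / k : ℝ) := by
        rw [one_div, ENNReal.pow_rpow_inv_natCast hk]
    _ ≤ (‖a ^ k‖₊ : ℝ≥0∞) ^ (1 / k : ℝ) := by gcongr; exact_mod_cast h k

theorem sum_norm_le_linfty_opNorm {m ι α : Type*} [Fintype m] [Fintype ι] [NormedAddCommGroup α]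
    (M : Matrix m ι α) (i : m) :
    ∑ j, ‖M i j‖ ≤ ‖M‖ := by
  rw [linfty_opNorm_def]
  simp only [← coe_nnnorm, ← NNReal.coe_sum]
  exact NNReal.coe_le_coe.2 (Finset.le_sup (f := fun i => ∑ j, ‖M i j‖₊) (Finset.mem_univ i))

section Nonneg

variable {ι : Type*} {B C : Matrix ι ι ℝ}

theorem one_add_apply_nonneg [DecidableEq ι] (hB : ∀ i j, 0 ≤ B i j) (i j : ι) :
    0 ≤ (1 + B) i j := by
  rw [Matrix.add_apply, one_apply]
  split_ifs <;> linarith [hB i j]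

theorem one_add_apply_self_pos [DecidableEq ι] (hB : ∀ i j, 0 ≤ B i j) (i : ι) :
    0 < (1 + B) i i := by
  rw [Matrix.add_apply, one_apply_eq]
  linarith [hB i i]

variable [Fintype ι]

theorem mulVec_mono_of_nonneg (hB : ∀ i j, 0 ≤ B i j) {v w : ι → ℝ} (h : v ≤ w) :
    B *ᵥ v ≤ B *ᵥ w := fun i =>
  Finset.sum_le_sum fun j _ => mul_le_mul_of_nonneg_left (h j) (hB i j)

theorem mul_apply_ge_of_nonneg (hB : ∀ i j, 0 ≤ B i j) (hC : ∀ i j, 0 ≤ C i j) (i k j : ι) :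
    B i k * C k j ≤ (B * C) i j :=
  Finset.single_le_sum (f := fun k => B i k * C k j) (fun k _ => mul_nonneg (hB i k) (hC k j))
    (Finset.mem_univ k)

theorem mulVec_pos_of_pos (hC : ∀ i j, 0 < C i j) {v : ι → ℝ} (hv0 : 0 ≤ v) (hv : v ≠ 0)
    (i : ι) : 0 < (C *ᵥ v) i := by
  obtain ⟨j, hj⟩ := Function.ne_iff.1 hv
  calc 0 < C i j * v j := mul_pos (hC i j) (lt_of_le_of_ne (hv0 j) (Ne.symm hj))
    _ ≤ (C *ᵥ v) i := Finset.single_le_sum (f := fun j => C i j * v j)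
        (fun j _ => mul_nonneg (hC i j).le (hv0 j)) (Finset.mem_univ j)

variable [DecidableEq ι]

theorem pow_smul_le_pow_mulVec (hB : ∀ i j, 0 ≤ B i j) {s : ℝ} (hs : 0 ≤ s) {w : ι → ℝ}
    (h : s • w ≤ B *ᵥ w) (k : ℕ) : s ^ k • w ≤ (B ^ k) *ᵥ w := by
  induction k with
  | zero => simp
  | succ k ih =>
    calc s ^ (k + 1) • w = s ^ k • s • w := by rw [pow_succ, mul_smul]
      _ ≤ s ^ k • B *ᵥ w := smul_le_smul_of_nonneg_left h (pow_nonneg hs k)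
      _ = B *ᵥ (s ^ k • w) := (mulVec_smul _ _ _).symm
      _ ≤ B *ᵥ ((B ^ k) *ᵥ w) := mulVec_mono_of_nonneg hB ih
      _ = (B ^ (k + 1)) *ᵥ w := by rw [mulVec_mulVec, pow_succ']

theorem one_add_pow_succ_apply_pos (hB : ∀ i j, 0 ≤ B i j) {m : ℕ} {i k j : ι}
    (hik : 0 < ((1 + B) ^ m) i k) (hkj : 0 < (1 + B) k j) : 0 < ((1 + B) ^ (m + 1)) i j := by
  rw [pow_succ]
  exact (mul_pos hik hkj).trans_le <| mul_apply_ge_of_nonneg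
    (pow_apply_nonneg (one_add_apply_nonneg hB) m) (one_add_apply_nonneg hB) i k j

theorem one_add_pow_apply_self_pos (hB : ∀ i j, 0 ≤ B i j) (m : ℕ) (i : ι) :
    0 < ((1 + B) ^ m) i i := by
  induction m with
  | zero => simp
  | succ m ih => exact one_add_pow_succ_apply_pos hB ih (one_add_apply_self_pos hB i)

end Nonneg

theorem IsIrred.of_offDiag_ne_zero {n : ℕ} {A B : Matrix (Fin n) (Fin n) ℝ} (hA : IsIrred A)
    (h : ∀ i j, i ≠ j → A i j ≠ 0 → B i j ≠ 0) : IsIrred B := by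
  intro α hne huniv
  obtain ⟨i, hi, j, hj, hij⟩ := hA α hne huniv
  exact ⟨i, hi, j, hj, h i j (by rintro rfl; exact Finset.mem_compl.1 hj hi) hij⟩

theorem IsIrred.transpose {n : ℕ} {B : Matrix (Fin n) (Fin n) ℝ} (hB : IsIrred B) :
    IsIrred Bᵀ := by
  intro α hne huniv
  obtain ⟨i, hi, j, hj, hij⟩ :=
    hB αᶜ (by simpa [Finset.nonempty_iff_ne_empty] using huniv) (by simpa using hne.ne_empty)
  exact ⟨j, by simpa using hj, i, hi, hij⟩

section Irreducible

variable {n : ℕ} {B : Matrix (Fin n) (Fin n) ℝ}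

def posSupport (M : Matrix (Fin n) (Fin n) ℝ) (i : Fin n) : Finset (Fin n) :=
  Finset.univ.filter fun j => 0 < M i j

@[simp]
theorem mem_posSupport {M : Matrix (Fin n) (Fin n) ℝ} {i j : Fin n} :
    j ∈ posSupport M i ↔ 0 < M i j := by
  simp [posSupport]

theorem min_le_card_posSupport_one_add_pow (hB : ∀ i j, 0 ≤ B i j) (hirr : IsIrred B)
    (i : Fin n) (m : ℕ) : min n (m + 1) ≤ (posSupport ((1 + B) ^ m) i).card := by
  induction m with
  | zero =>
    have := Finset.card_pos.2 ⟨i, mem_posSupport.2 (one_add_pow_apply_self_pos hB 0 i)⟩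
    omega
  | succ m ih =>
    set S := posSupport ((1 + B) ^ m) i
    have hsub : S ⊆ posSupport ((1 + B) ^ (m + 1)) i := fun j hj =>
      mem_posSupport.2 <| one_add_pow_succ_apply_pos hB (mem_posSupport.1 hj)
        (one_add_apply_self_pos hB j)
    by_cases hS : S = Finset.univ
    · rw [hS, Finset.univ_subset_iff] at hsub
      simp [hsub]
    obtain ⟨a, ha, b, hb, hab⟩ :=
      hirr S ⟨i, mem_posSupport.2 (one_add_pow_apply_self_pos hB m i)⟩ hS
    have hb : b ∉ S := Finset.mem_compl.1 hb
    have hab' : 0 < (1 + B) a b := by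
      have hne : a ≠ b := by rintro rfl; exact hb ha
      simpa [one_apply, hne] using lt_of_le_of_ne (hB a b) (Ne.symm hab)
    have hlt : S ⊂ posSupport ((1 + B) ^ (m + 1)) i :=
      Finset.ssubset_iff_of_subset hsub |>.2
        ⟨b, mem_posSupport.2 (one_add_pow_succ_apply_pos hB (mem_posSupport.1 ha) hab'), hb⟩
    have := Finset.card_lt_card hlt
    omega

theorem IsIrred.one_add_pow_pos (hB : ∀ i j, 0 ≤ B i j) (hirr : IsIrred B) (i j : Fin n) :
    0 < ((1 + B) ^ (n - 1)) i j := by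
  have hcard := min_le_card_posSupport_one_add_pow hB hirr i (n - 1)
  have huniv := Finset.eq_univ_of_card (posSupport ((1 + B) ^ (n - 1)) i) <|
    le_antisymm (Finset.card_le_univ _) (by rw [Fintype.card_fin]; omega)
  exact mem_posSupport.1 (huniv ▸ Finset.mem_univ j)

end Irreducible

section Perron

variable {n : ℕ} {B : Matrix (Fin n) (Fin n) ℝ}

theorem ofReal_mulVec (B : Matrix (Fin n) (Fin n) ℝ) (v : Fin n → ℝ) :
    B.map Complex.ofReal *ᵥ (Complex.ofReal ∘ v) = Complex.ofReal ∘ (B *ᵥ v) :=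
  funext fun i => (Complex.ofRealHom.map_mulVec B v i).symm

theorem pow_le_norm_map_ofReal_pow (hB : ∀ i j, 0 ≤ B i j) {s : ℝ} (hs : 0 ≤ s)
    {w : Fin n → ℝ} (hw0 : 0 ≤ w) (hw : w ≠ 0) (h : s • w ≤ B *ᵥ w) (k : ℕ) :
    s ^ k ≤ ‖B.map Complex.ofReal ^ k‖ := by
  obtain ⟨j, hj⟩ := Function.ne_iff.1 hw
  obtain ⟨i, -, hi⟩ := Finset.exists_max_image Finset.univ w ⟨j, Finset.mem_univ j⟩
  have hwi : 0 < w i := (lt_of_le_of_ne (hw0 j) (Ne.symm hj)).trans_le (hi j (Finset.mem_univ j))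
  have hrow : s ^ k * w i ≤ (∑ j, (B ^ k) i j) * w i :=
    calc s ^ k * w i ≤ ((B ^ k) *ᵥ w) i := pow_smul_le_pow_mulVec hB hs h k i
      _ = ∑ j, (B ^ k) i j * w j := rfl
      _ ≤ ∑ j, (B ^ k) i j * w i := Finset.sum_le_sum fun j _ =>
          mul_le_mul_of_nonneg_left (hi j (Finset.mem_univ j)) (pow_apply_nonneg hB k i j)
      _ = (∑ j, (B ^ k) i j) * w i := (Finset.sum_mul ..).symm
  calc s ^ k ≤ ∑ j, (B ^ k) i j := le_of_mul_le_mul_right hrow hwi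
    _ = ∑ j, ‖(B.map Complex.ofReal ^ k) i j‖ := by
        have hpow : B.map Complex.ofReal ^ k = (B ^ k).map Complex.ofReal :=
          (Matrix.map_pow B Complex.ofRealHom k).symm
        simp [hpow, abs_of_nonneg (pow_apply_nonneg hB k i _)]
    _ ≤ _ := sum_norm_le_linfty_opNorm _ i

theorem map_ofReal_mulVec_eq_smul {v : Fin n → ℝ} {c : ℝ} (h : B *ᵥ v = c • v) :
    B.map Complex.ofReal *ᵥ (Complex.ofReal ∘ v) = (c : ℂ) • (Complex.ofReal ∘ v) := by
  rw [ofReal_mulVec, h]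
  ext i
  simp

theorem norm_smul_le_mulVec_norm (hB : ∀ i j, 0 ≤ B i j) {μ : ℂ} {z : Fin n → ℂ}
    (hz : B.map Complex.ofReal *ᵥ z = μ • z) :
    ‖μ‖ • (fun i => ‖z i‖) ≤ B *ᵥ fun i => ‖z i‖ := fun i => by
  simp only [Pi.smul_apply, smul_eq_mul]
  calc ‖μ‖ * ‖z i‖ = ‖(B.map Complex.ofReal *ᵥ z) i‖ := by rw [hz]; simp
    _ = ‖∑ j, B.map Complex.ofReal i j * z j‖ := rfl
    _ ≤ ∑ j, ‖B.map Complex.ofReal i j * z j‖ := norm_sum_le _ _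
    _ = (B *ᵥ fun i => ‖z i‖) i := Finset.sum_congr rfl fun j _ => by
        simp [abs_of_nonneg (hB i j)]

def perronRoot (B : Matrix (Fin n) (Fin n) ℝ) : ℝ :=
  (spectralRadius ℂ (B.map Complex.ofReal)).toReal

theorem perronRoot_nonneg (B : Matrix (Fin n) (Fin n) ℝ) : 0 ≤ perronRoot B :=
  ENNReal.toReal_nonneg

theorem perronRoot_transpose (B : Matrix (Fin n) (Fin n) ℝ) : perronRoot Bᵀ = perronRoot B := by
  simp only [perronRoot, spectralRadius, transpose_map, spectrum_transpose]

variable [NeZero n]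

theorem spectralRadius_map_ofReal_ne_top (B : Matrix (Fin n) (Fin n) ℝ) :
    spectralRadius ℂ (B.map Complex.ofReal) ≠ ⊤ :=
  ne_top_of_le_ne_top ENNReal.coe_ne_top (spectrum.spectralRadius_le_nnnorm _)

theorem norm_le_perronRoot {μ : ℂ} (hμ : μ ∈ spectrum ℂ (B.map Complex.ofReal)) :
    ‖μ‖ ≤ perronRoot B := by
  have : (‖μ‖₊ : ℝ≥0∞) ≤ spectralRadius ℂ (B.map Complex.ofReal) :=
    le_iSup₂ (f := fun k _ => (‖k‖₊ : ℝ≥0∞)) μ hμ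
  rw [perronRoot]
  simpa using ENNReal.toReal_mono (spectralRadius_map_ofReal_ne_top B) this

theorem exists_norm_eq_perronRoot (B : Matrix (Fin n) (Fin n) ℝ) :
    ∃ μ ∈ spectrum ℂ (B.map Complex.ofReal), ‖μ‖ = perronRoot B := by
  obtain ⟨μ, hμ, h⟩ :=
    spectrum.exists_nnnorm_eq_spectralRadius_of_nonempty (spectrum.nonempty (B.map Complex.ofReal))
  exact ⟨μ, hμ, by rw [perronRoot, ← h]; rfl⟩

theorem le_perronRoot_of_smul_le_mulVec (hB : ∀ i j, 0 ≤ B i j) {s : ℝ} {w : Fin n → ℝ}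
    (hw0 : 0 ≤ w) (hw : w ≠ 0) (h : s • w ≤ B *ᵥ w) : s ≤ perronRoot B := by
  rcases le_or_gt s 0 with hs | hs
  · exact hs.trans (perronRoot_nonneg B)
  lift s to ℝ≥0 using hs.le
  have := le_spectralRadius_of_pow_le_nnnorm fun k => by
    rw [← NNReal.coe_le_coe]
    push_cast
    exact pow_le_norm_map_ofReal_pow hB s.2 hw0 hw h k
  rw [perronRoot]
  simpa using ENNReal.toReal_mono (spectralRadius_map_ofReal_ne_top B) this

theorem mulVec_eq_perronRoot_smul_of_le (hB : ∀ i j, 0 ≤ B i j) (hirr : IsIrred B)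
    {u : Fin n → ℝ} (hu0 : 0 ≤ u) (hu : u ≠ 0) (h : perronRoot B • u ≤ B *ᵥ u) :
    B *ᵥ u = perronRoot B • u ∧ ∀ i, 0 < u i := by
  set ρ := perronRoot B
  set C := (1 + B) ^ (n - 1)
  have hC : ∀ i j, 0 < C i j := hirr.one_add_pow_pos hB
  have hCu : ∀ i, 0 < (C *ᵥ u) i := mulVec_pos_of_pos hC hu0 hu
  have heig : B *ᵥ u = ρ • u := by
    by_contra hne
    -- `C` spreads the slack `B u - ρ u` to every coordinate, so `ρ` could be raised.
    have hBC : B * C = C * B := ((Commute.one_right B).add_right (Commute.refl B)).pow_right _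
    have hBw : B *ᵥ (C *ᵥ u) = ρ • (C *ᵥ u) + C *ᵥ (B *ᵥ u - ρ • u) := by
      rw [mulVec_sub, mulVec_smul, mulVec_mulVec, hBC, ← mulVec_mulVec]
      abel
    obtain ⟨ε, hε, hεw⟩ := exists_pos_smul_le hCu
      (mulVec_pos_of_pos hC (sub_nonneg.2 h) (sub_ne_zero.2 hne))
    have : ρ + ε ≤ ρ := le_perronRoot_of_smul_le_mulVec hB (fun i => (hCu i).le)
      (fun h0 => (hCu 0).ne' (congrFun h0 0)) (by rw [add_smul, hBw]; exact add_le_add le_rfl hεw)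
    linarith
  have hρ1 : 0 ≤ 1 + ρ := by linarith [perronRoot_nonneg B]
  refine ⟨heig, fun i => pos_of_mul_pos_right ?_ (pow_nonneg hρ1 (n - 1))⟩
  have h1B : (1 + B) *ᵥ u = (1 + ρ) • u := by rw [add_mulVec, one_mulVec, heig, add_smul, one_smul]
  simpa [C, pow_mulVec_of_mulVec_eq_smul h1B] using hCu i

theorem exists_pos_mulVec_eq_perronRoot_smul (hB : ∀ i j, 0 ≤ B i j) (hirr : IsIrred B) :
    ∃ u : Fin n → ℝ, (∀ i, 0 < u i) ∧ B *ᵥ u = perronRoot B • u := by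
  obtain ⟨μ, hμ, hμρ⟩ := exists_norm_eq_perronRoot B
  obtain ⟨z, hz0, hz⟩ := mem_spectrum_iff_exists_mulVec_eq_smul.1 hμ
  have hu : (fun i => ‖z i‖) ≠ 0 := fun h => hz0 (funext fun i => norm_eq_zero.1 (congrFun h i))
  obtain ⟨heig, hpos⟩ := mulVec_eq_perronRoot_smul_of_le hB hirr (fun i => norm_nonneg _) hu
    (hμρ ▸ norm_smul_le_mulVec_norm hB hz)
  exact ⟨_, hpos, heig⟩

theorem perronRoot_mem_spectrum (hB : ∀ i j, 0 ≤ B i j) (hirr : IsIrred B) :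
    (perronRoot B : ℂ) ∈ spectrum ℂ (B.map Complex.ofReal) := by
  obtain ⟨u, hu, hBu⟩ := exists_pos_mulVec_eq_perronRoot_smul hB hirr
  refine mem_spectrum_iff_exists_mulVec_eq_smul.2
    ⟨_, fun h => (hu 0).ne' ?_, map_ofReal_mulVec_eq_smul hBu⟩
  simpa using congrFun h 0

theorem exists_eq_smul_ofReal_of_mulVec_eq_perronRoot_smul (hB : ∀ i j, 0 ≤ B i j)
    (hirr : IsIrred B) {u : Fin n → ℝ} (hu : ∀ i, 0 < u i) (hBu : B *ᵥ u = perronRoot B • u)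
    {z : Fin n → ℂ} (hz : B.map Complex.ofReal *ᵥ z = (perronRoot B : ℂ) • z) :
    ∃ c : ℂ, z = c • (Complex.ofReal ∘ u) := by
  -- Subtracting the multiple of `u` that agrees with `z` at `0` leaves an eigenvector whose
  -- modulus vanishes at `0`, hence is not positive, hence is zero.
  refine ⟨z 0 / u 0, sub_eq_zero.1 ?_⟩
  set y := z - (z 0 / u 0) • (Complex.ofReal ∘ u)
  have hy : B.map Complex.ofReal *ᵥ y = (perronRoot B : ℂ) • y := by
    rw [mulVec_sub, mulVec_smul, map_ofReal_mulVec_eq_smul hBu, hz, smul_sub, smul_comm]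
  have hy0 : y 0 = 0 := by
    simp [y, div_mul_cancel₀ _ (Complex.ofReal_ne_zero.2 (hu 0).ne')]
  by_contra hne
  have hne' : (fun i => ‖y i‖) ≠ 0 := fun h => hne (funext fun i => norm_eq_zero.1 (congrFun h i))
  have hle := norm_smul_le_mulVec_norm hB hy
  rw [Complex.norm_real, Real.norm_of_nonneg (perronRoot_nonneg B)] at hle
  simpa [hy0] using (mulVec_eq_perronRoot_smul_of_le hB hirr (fun i => norm_nonneg _) hne' hle).2 0

theorem exists_eq_smul_of_mulVec_eq_perronRoot_smul (hB : ∀ i j, 0 ≤ B i j) (hirr : IsIrred B)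
    {u : Fin n → ℝ} (hu : ∀ i, 0 < u i) (hBu : B *ᵥ u = perronRoot B • u) {v : Fin n → ℝ}
    (hv : B *ᵥ v = perronRoot B • v) : ∃ c : ℝ, v = c • u := by
  obtain ⟨c, hc⟩ := exists_eq_smul_ofReal_of_mulVec_eq_perronRoot_smul hB hirr hu hBu
    (map_ofReal_mulVec_eq_smul hv)
  refine ⟨c.re, funext fun i => ?_⟩
  simpa using congrArg Complex.re (congrFun hc i)

end Perron

theorem map_ofReal_smul_one_sub {n : ℕ} (B : Matrix (Fin n) (Fin n) ℝ) (s : ℝ) :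
    (s • 1 - B).map Complex.ofReal = (s : ℂ) • 1 - B.map Complex.ofReal := by
  ext i j
  rcases eq_or_ne i j with rfl | hij <;> simp [one_apply, *]

theorem IsZmat.exists_eq_smul_one_sub {n : ℕ} {A : Matrix (Fin n) (Fin n) ℝ} (hZ : IsZmat A)
    (hirr : IsIrred A) :
    ∃ (s : ℝ) (B : Matrix (Fin n) (Fin n) ℝ), (∀ i j, 0 ≤ B i j) ∧ IsIrred B ∧ A = s • 1 - B := by
  obtain ⟨s, hs⟩ := (Set.finite_range fun i => A i i).bddAbove
  refine ⟨s, s • 1 - A, fun i j => ?_, hirr.of_offDiag_ne_zero fun i j hij h => ?_,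
    (sub_sub_cancel _ _).symm⟩
  · rcases eq_or_ne i j with rfl | hij
    · simpa using hs ⟨i, rfl⟩
    · simpa [one_apply, hij] using hZ i j hij
  · simpa [one_apply, hij] using h

section ZMatrix

variable {n : ℕ} [NeZero n] {B : Matrix (Fin n) (Fin n) ℝ}

theorem sub_perronRoot_lt_re (s : ℝ) {μ : ℂ}
    (hμ : μ ∈ spectrum ℂ ((s • 1 - B).map Complex.ofReal))
    (hne : μ ≠ ((s - perronRoot B : ℝ) : ℂ)) : s - perronRoot B < μ.re := by
  rw [map_ofReal_smul_one_sub, ← sub_sub_cancel (s : ℂ) μ,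
    sub_mem_spectrum_smul_one_sub_iff] at hμ
  have := Complex.re_lt_of_norm_le_of_ne (norm_le_perronRoot hμ) fun h => hne (by
    rw [Complex.ofReal_sub, ← h]; ring)
  simp only [Complex.sub_re, Complex.ofReal_re] at this
  linarith

theorem rootMultiplicity_charpoly_smul_one_sub (hB : ∀ i j, 0 ≤ B i j) (hirr : IsIrred B)
    (s : ℝ) : ((s • 1 - B).map Complex.ofReal).charpoly.rootMultiplicity
      ((s - perronRoot B : ℝ) : ℂ) = 1 := by
  obtain ⟨u, hu, hBu⟩ := exists_pos_mulVec_eq_perronRoot_smul hB hirr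
  obtain ⟨q, hq, hBq⟩ := exists_pos_mulVec_eq_perronRoot_smul (B := Bᵀ) (fun i j => hB j i)
    hirr.transpose
  rw [perronRoot_transpose] at hBq
  rw [map_ofReal_smul_one_sub, Complex.ofReal_sub]
  refine rootMultiplicity_charpoly_eq_one (u := Complex.ofReal ∘ u) (q := Complex.ofReal ∘ q)
    ((smul_one_sub_mulVec_eq_smul_iff _ _ _ _).2 (map_ofReal_mulVec_eq_smul hBu)) ?_ ?_
    fun z hz => exists_eq_smul_ofReal_of_mulVec_eq_perronRoot_smul hB hirr hu hBu
      ((smul_one_sub_mulVec_eq_smul_iff _ _ _ _).1 hz)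
  · rw [← mulVec_transpose, transpose_sub, transpose_smul, transpose_one,
      smul_one_sub_mulVec_eq_smul_iff, ← transpose_map]
    exact map_ofReal_mulVec_eq_smul hBq
  · have : (Complex.ofReal ∘ q) ⬝ᵥ (Complex.ofReal ∘ u) = ((q ⬝ᵥ u : ℝ) : ℂ) := by
      simp [dotProduct]
    rw [this, Complex.ofReal_ne_zero]
    exact (Finset.sum_pos (fun i _ => mul_pos (hq i) (hu i)) Finset.univ_nonempty).ne'

end ZMatrix

theorem stmt_6 (n : ℕ) (hn : 1 ≤ n)
    (A : Matrix (Fin n) (Fin n) ℝ)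
    (hZ : IsZmat A) (hirr : IsIrred A) :
    ∃ r : ℝ,
      -- r is an eigenvalue of A
      (r : ℂ) ∈ spectrum ℂ (A.map (Complex.ofReal)) ∧
      -- every other eigenvalue has strictly larger real part
      (∀ μ ∈ spectrum ℂ (A.map (Complex.ofReal)), μ ≠ (r : ℂ) → r < μ.re) ∧
      -- r is a simple eigenvalue (algebraic multiplicity one)
      Polynomial.rootMultiplicity (r : ℂ) (A.map (Complex.ofReal)).charpoly = 1 ∧
      -- there is a positive eigenvector for r
      (∃ v : Fin n → ℝ, (∀ i, 0 < v i) ∧ A *ᵥ v = r • v) ∧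
      -- eigenvectors for r are unique up to scaling
      (∀ v w : Fin n → ℝ, v ≠ 0 → w ≠ 0 → A *ᵥ v = r • v → A *ᵥ w = r • w →
        ∃ c : ℝ, w = c • v) := by
  have : NeZero n := ⟨by omega⟩
  obtain ⟨s, B, hB, hBirr, rfl⟩ := IsZmat.exists_eq_smul_one_sub hZ hirr
  obtain ⟨u, hu, hBu⟩ := exists_pos_mulVec_eq_perronRoot_smul hB hBirr
  have heig : ∀ v, (s • 1 - B) *ᵥ v = (s - perronRoot B) • v ↔ B *ᵥ v = perronRoot B • v :=
    smul_one_sub_mulVec_eq_smul_iff B s _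
  refine ⟨s - perronRoot B, ?_, fun μ hμ hne => sub_perronRoot_lt_re s hμ hne,
    rootMultiplicity_charpoly_smul_one_sub hB hBirr s, ⟨u, hu, (heig u).2 hBu⟩, ?_⟩
  · rw [map_ofReal_smul_one_sub, Complex.ofReal_sub, sub_mem_spectrum_smul_one_sub_iff]
    exact perronRoot_mem_spectrum hB hBirr
  · intro v w hv _ hvr hwr
    obtain ⟨a, rfl⟩ := exists_eq_smul_of_mulVec_eq_perronRoot_smul hB hBirr hu hBu ((heig v).1 hvr)
    obtain ⟨b, rfl⟩ := exists_eq_smul_of_mulVec_eq_perronRoot_smul hB hBirr hu hBu ((heig w).1 hwr)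
    have ha : a ≠ 0 := by rintro rfl; simp at hv
    exact ⟨b / a, by rw [smul_smul, div_mul_cancel₀ _ ha]⟩
end
end

section
/- Let r ∈ ℝ with r ≥ 0, let λ ∈ ℝⁿ have all entries positive, and let x ∈ ℝⁿ. Then −J(x)ᵀ is an irreducible M-matrix satisfying −J(x)ᵀ λ = r λ (so that r is its Perron root and λ a Perron vector) if and only if h(λ) is positive definite (i.e. λ ∈ Λ) and x = (1/2) h(λ)⁻¹ [λ] (I_L^* + r·1). In that case x has all entries positive. -/
open Matrix Set

noncomputable section

/-- `(1/2) h(λ)⁻¹ [λ](I* + r·1)` with `I* = Y V*`. -/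
def PhiD {k : ℕ} (Y : Matrix (Fin k) (Fin k) ℝ) (Vs : Fin k → ℝ) (l : Fin k → ℝ) (r : ℝ) :
    Fin k → ℝ :=
  (1/2 : ℝ) • ((hmat Y l)⁻¹ *ᵥ (Matrix.diagonal l *ᵥ (Y *ᵥ Vs + r • (1 : Fin k → ℝ))))

/-!
As `Y` is symmetric, `-J(x)ᵀ = Y [x] - [Y (V* - x)]`, and the Perron equation `-J(x)ᵀ λ = r λ`
is the linear system `h(λ) x = c` with `c = ½ [λ](I* + r 1)` nonnegative and nonzero, where
`h(λ)` is a symmetric irreducible Z-matrix.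

If `h(λ)` is positive definite, it is inverse-positive, and irreducibility upgrades the solution
`x ≥ 0` to `x > 0`. Then `-J(x)ᵀ` is an irreducible Z-matrix with the positive eigenvector `λ`,
and Gershgorin's theorem for `[λ]⁻¹ (-J(x)ᵀ) [λ]` puts its spectrum in `r ≤ Re μ`.

Conversely, the off-diagonal entries `Y i j * x j` of the irreducible Z-matrix `-J(x)ᵀ` force
`x > 0` (each column has a nonzero one). For a positive solution `x`, the substitution `v = x u`
gives `vᵀ h(λ) v = ∑ u i² x i c i - ½ ∑ h i j x i x j (u i - u j)²`, which is positive for `v ≠ 0`.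
-/

namespace IsIrred

variable {k : ℕ} {A : Matrix (Fin k) (Fin k) ℝ}

theorem forall_of_closed_s7 (hA : IsIrred A) {p : Fin k → Prop}
    (hp : ∀ i j, p i → A i j ≠ 0 → p j) {i₀ : Fin k} (hi₀ : p i₀) : ∀ j, p j := by
  classical
  by_contra! hne
  have hα : Finset.univ.filter p ≠ Finset.univ := by
    obtain ⟨j, hj⟩ := hne
    exact fun h => hj (Finset.mem_filter.mp (h ▸ Finset.mem_univ j)).2
  obtain ⟨i, hi, j, hj, hij⟩ := hA _ ⟨i₀, by simpa using hi₀⟩ hα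
  simp only [Finset.mem_compl, Finset.mem_filter, Finset.mem_univ, true_and] at hi hj
  exact hj (hp i j hi hij)

theorem exists_ne_apply_ne_zero (hA : IsIrred A) {i₀ j : Fin k} (hi₀ : i₀ ≠ j) :
    ∃ i, i ≠ j ∧ A i j ≠ 0 := by
  by_contra! h
  exact hA.forall_of_closed_s7 (p := (· ≠ j)) (fun i m hi him hm => him (hm ▸ h i hi)) hi₀ j rfl

theorem of_offDiag {B : Matrix (Fin k) (Fin k) ℝ} (hA : IsIrred A)
    (hAB : ∀ i j, i ≠ j → A i j ≠ 0 → B i j ≠ 0) : IsIrred B := by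
  intro α hne huniv
  obtain ⟨i, hi, j, hj, hij⟩ := hA α hne huniv
  exact ⟨i, hi, j, hj, hAB i j (by rintro rfl; exact Finset.mem_compl.mp hj hi) hij⟩

end IsIrred

section Gershgorin

variable {ι : Type*} [Fintype ι] [DecidableEq ι]

theorem sum_erase_abs_mul_eq_of_mulVec_eq_smul {A : Matrix ι ι ℝ}
    (hZ : ∀ i j, i ≠ j → A i j ≤ 0) {l : ι → ℝ} {r : ℝ}
    (heig : A *ᵥ l = r • l) (i : ι) :
    ∑ j ∈ Finset.univ.erase i, |A i j| * l j = (A i i - r) * l i := by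
  have hrow : ∑ j, A i j * l j = r * l i := congrFun heig i
  rw [← Finset.add_sum_erase _ _ (Finset.mem_univ i)] at hrow
  have : ∑ j ∈ Finset.univ.erase i, |A i j| * l j = -∑ j ∈ Finset.univ.erase i, A i j * l j := by
    rw [← Finset.sum_neg_distrib]
    refine Finset.sum_congr rfl fun j hj => ?_
    rw [abs_of_nonpos (hZ i j (Finset.ne_of_mem_erase hj).symm)]
    ring
  linarith

/-- Gershgorin's theorem for the similar matrix `[l]⁻¹ A [l]`, whose `i`-th disc has centre
`A i i` and radius `A i i - r`. -/
theorem le_re_of_mem_spectrum_of_mulVec_eq_smul {A : Matrix ι ι ℝ}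
    (hZ : ∀ i j, i ≠ j → A i j ≤ 0) {l : ι → ℝ} (hl : ∀ i, 0 < l i) {r : ℝ}
    (heig : A *ᵥ l = r • l) {μ : ℂ} (hμ : μ ∈ spectrum ℂ (A.map Complex.ofReal)) :
    r ≤ μ.re := by
  have hl0 : ∀ i, (l i : ℂ) ≠ 0 := fun i => Complex.ofReal_ne_zero.mpr (hl i).ne'
  let D : (Matrix ι ι ℂ)ˣ :=
    ⟨diagonal fun i => (l i : ℂ), diagonal fun i => (l i : ℂ)⁻¹,
      by simp [diagonal_mul_diagonal, hl0], by simp [diagonal_mul_diagonal, hl0]⟩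
  set B : Matrix ι ι ℂ := ((D⁻¹ : (Matrix ι ι ℂ)ˣ) : Matrix ι ι ℂ) * A.map Complex.ofReal * D
  have hB : ∀ i j, B i j = ((l i)⁻¹ * A i j * l j : ℝ) := fun i j => by
    simp [B, D, Matrix.mul_diagonal, Matrix.diagonal_mul]
  have hμB : Module.End.HasEigenvalue (toLin' B) μ := by
    rwa [Module.End.hasEigenvalue_iff_mem_spectrum, spectrum_toLin', spectrum.units_conjugate']
  obtain ⟨i, hi⟩ := eigenvalue_mem_ball hμB
  have hrad : ∑ j ∈ Finset.univ.erase i, ‖B i j‖ = A i i - r := by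
    have hnorm : ∀ j, ‖B i j‖ = (l i)⁻¹ * (|A i j| * l j) := fun j => by
      rw [hB, Complex.norm_real, Real.norm_eq_abs, abs_mul, abs_mul, abs_inv,
        abs_of_pos (hl i), abs_of_pos (hl j), mul_assoc]
    simp_rw [hnorm, ← Finset.mul_sum, sum_erase_abs_mul_eq_of_mulVec_eq_smul hZ heig i]
    field_simp [(hl i).ne']
  have hdiag : ((l i)⁻¹ * A i i * l i : ℝ) = A i i := by field_simp [(hl i).ne']
  rw [Metric.mem_closedBall, hrad, hB, hdiag, dist_comm, Complex.dist_eq] at hi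
  have := (Complex.re_le_norm _).trans hi
  rw [Complex.sub_re, Complex.ofReal_re] at this
  linarith

end Gershgorin

section QuadraticForm

variable {ι : Type*} [Fintype ι] {h : Matrix ι ι ℝ}

theorem dotProduct_mul_mulVec_mul_eq (hh : h.IsSymm) (x u : ι → ℝ) :
    (x * u) ⬝ᵥ (h *ᵥ (x * u)) = ∑ i, u i ^ 2 * x i * (h *ᵥ x) i
      - (∑ i, ∑ j, h i j * x i * x j * (u i - u j) ^ 2) / 2 := by
  have hswap : ∑ i, ∑ j, h i j * x i * x j * u j ^ 2 = ∑ i, ∑ j, h i j * x i * x j * u i ^ 2 := by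
    rw [Finset.sum_comm]
    exact Finset.sum_congr rfl fun i _ => Finset.sum_congr rfl fun j _ => by
      rw [hh.apply i j]; ring
  have hexpand : ∑ i, ∑ j, h i j * x i * x j * (u i - u j) ^ 2
      = ∑ i, ∑ j, h i j * x i * x j * u i ^ 2 + ∑ i, ∑ j, h i j * x i * x j * u j ^ 2
        - 2 * ∑ i, ∑ j, h i j * x i * x j * (u i * u j) := by
    simp only [← Finset.sum_add_distrib, Finset.mul_sum, ← Finset.sum_sub_distrib]
    exact Finset.sum_congr rfl fun i _ => Finset.sum_congr rfl fun j _ => by ring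
  have hform : (x * u) ⬝ᵥ (h *ᵥ (x * u)) = ∑ i, ∑ j, h i j * x i * x j * (u i * u j) := by
    simp only [dotProduct, mulVec, Pi.mul_apply, Finset.mul_sum]
    exact Finset.sum_congr rfl fun i _ => Finset.sum_congr rfl fun j _ => by ring
  have hdiag : ∑ i, u i ^ 2 * x i * (h *ᵥ x) i = ∑ i, ∑ j, h i j * x i * x j * u i ^ 2 := by
    simp only [dotProduct, mulVec, Finset.mul_sum]
    exact Finset.sum_congr rfl fun i _ => Finset.sum_congr rfl fun j _ => by ring
  rw [hform, hdiag, hexpand, hswap]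
  ring

end QuadraticForm

theorem Matrix.PosDef.nonneg_of_mulVec_nonneg {ι : Type*} [Fintype ι] {h : Matrix ι ι ℝ}
    (hPD : h.PosDef) (hZ : ∀ i j, i ≠ j → h i j ≤ 0) {x : ι → ℝ} (hc : 0 ≤ h *ᵥ x) :
    0 ≤ x := by
  -- `s` is the negative part of `x`: `sᵀ h s = sᵀ h (x + s) - sᵀ (h x) ≤ 0`.
  set s : ι → ℝ := fun i => max (-x i) 0
  have hs : 0 ≤ s := fun i => le_max_right _ _
  have hxs : 0 ≤ x + s := fun i => by simp only [Pi.add_apply, Pi.zero_apply, s]; grind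
  have hcross : s ⬝ᵥ (h *ᵥ (x + s)) ≤ 0 := by
    refine Finset.sum_nonpos fun i _ => ?_
    rw [mulVec, dotProduct, Finset.mul_sum]
    refine Finset.sum_nonpos fun j _ => ?_
    rcases eq_or_ne i j with rfl | hij
    · have : s i * (x i + s i) = 0 := by simp only [s]; grind
      simp only [Pi.add_apply]
      linear_combination h i i * this
    · exact mul_nonpos_of_nonneg_of_nonpos (hs i)
        (mul_nonpos_of_nonpos_of_nonneg (hZ i j hij) (hxs j))
  have hs0 : s = 0 := by
    by_contra hne
    have hpos := hPD.dotProduct_mulVec_pos hne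
    rw [star_trivial] at hpos
    rw [mulVec_add, dotProduct_add] at hcross
    linarith [dotProduct_nonneg_of_nonneg hs hc]
  intro i
  have := congrFun hs0 i
  simp only [s, Pi.zero_apply, max_eq_right_iff] at this
  simpa using this


section Positivity

variable {k : ℕ} {h : Matrix (Fin k) (Fin k) ℝ}

/-- With `v = x * u`, both sums in `dotProduct_mul_mulVec_mul_eq` have a sign; they vanish only
if `u` is constant along the edges of `h` and zero where `h *ᵥ x` is positive. -/
theorem posDef_of_pos_of_mulVec_nonneg (hsymm : h.IsSymm) (hZ : IsZmat h) (hirr : IsIrred h)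
    {x : Fin k → ℝ} (hx : ∀ i, 0 < x i) (hc : 0 ≤ h *ᵥ x) (hc' : h *ᵥ x ≠ 0) : h.PosDef := by
  refine .of_dotProduct_mulVec_pos (isHermitian_iff_isSymm.mpr hsymm) fun v hv => ?_
  set u := v / x
  have hvu : v = x * u := funext fun i => by simp [u, mul_div_cancel₀ _ (hx i).ne']
  have hterm : ∀ i j, h i j * x i * x j * (u i - u j) ^ 2 ≤ 0 := fun i j => by
    rcases eq_or_ne i j with rfl | hij
    · simp
    · exact mul_nonpos_of_nonpos_of_nonneg
        (mul_nonpos_of_nonpos_of_nonneg (mul_nonpos_of_nonpos_of_nonneg (hZ i j hij)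
          (hx i).le) (hx j).le) (sq_nonneg _)
  have hdiag : ∀ i, 0 ≤ u i ^ 2 * x i * (h *ᵥ x) i := fun i =>
    mul_nonneg (mul_nonneg (sq_nonneg _) (hx i).le) (hc i)
  have hT := Finset.sum_nonneg fun i (_ : i ∈ Finset.univ) => hdiag i
  have hS := Finset.sum_nonpos fun i (_ : i ∈ Finset.univ) =>
    Finset.sum_nonpos fun j (_ : j ∈ Finset.univ) => hterm i j
  rw [star_trivial, hvu, dotProduct_mul_mulVec_mul_eq hsymm]
  refine lt_of_le_of_ne (by linarith) fun h0 => hv ?_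
  have hT0 := (Finset.sum_eq_zero_iff_of_nonneg fun i _ => hdiag i).mp (by linarith)
  have hS0 := (Finset.sum_eq_zero_iff_of_nonpos fun i _ =>
    Finset.sum_nonpos fun j (_ : j ∈ Finset.univ) => hterm i j).mp (by linarith)
  have hedge : ∀ i j, u i = 0 → h i j ≠ 0 → u j = 0 := fun i j hi hij => by
    have := (Finset.sum_eq_zero_iff_of_nonpos fun j _ => hterm i j).mp
      (hS0 i (Finset.mem_univ _)) j (Finset.mem_univ _)
    simp only [mul_eq_zero, hij, (hx i).ne', (hx j).ne', pow_eq_zero_iff two_ne_zero,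
      sub_eq_zero, false_or] at this
    rwa [← this]
  obtain ⟨i₀, hi₀⟩ : ∃ i, (h *ᵥ x) i ≠ 0 := Function.ne_iff.mp hc'
  have hu₀ : u i₀ = 0 := by
    simpa [(hx i₀).ne', hi₀] using hT0 i₀ (Finset.mem_univ _)
  ext j
  simp [hvu, hirr.forall_of_closed_s7 hedge hu₀ j]

theorem pos_of_posDef_of_mulVec_nonneg (hPD : h.PosDef) (hZ : IsZmat h) (hirr : IsIrred h)
    {x : Fin k → ℝ}
    (hc : 0 ≤ h *ᵥ x) (hc' : h *ᵥ x ≠ 0) (i : Fin k) : 0 < x i := by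
  have hx := hPD.nonneg_of_mulVec_nonneg hZ hc
  have hterm : ∀ i j, x i = 0 → h i j * x j ≤ 0 := fun i j hi => by
    rcases eq_or_ne i j with rfl | hij
    · simp [hi]
    · exact mul_nonpos_of_nonpos_of_nonneg (hZ i j hij) (hx j)
  have hedge : ∀ i j, x i = 0 → h i j ≠ 0 → x j = 0 := fun i j hi hij => by
    have hrow : ∑ m, h i m * x m = 0 :=
      le_antisymm (Finset.sum_nonpos fun m _ => hterm i m hi) (hc i)
    have := (Finset.sum_eq_zero_iff_of_nonpos fun m _ => hterm i m hi).mp hrow j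
      (Finset.mem_univ _)
    exact (mul_eq_zero.mp this).resolve_left hij
  refine (hx i).lt_of_ne fun hi => hc' ?_
  have hx0 : x = 0 := funext (hirr.forall_of_closed_s7 hedge hi.symm)
  rw [hx0, mulVec_zero]

end Positivity

theorem pos_of_mulVec_nonneg_of_subsingleton {ι : Type*} [Fintype ι] [Subsingleton ι]
    {h : Matrix ι ι ℝ} (hdiag : ∀ i, 0 < h i i) {x : ι → ℝ} (hc : 0 ≤ h *ᵥ x)
    (hc' : h *ᵥ x ≠ 0) (i : ι) : 0 < x i := by
  obtain ⟨j, hj⟩ : ∃ j, (h *ᵥ x) j ≠ 0 := Function.ne_iff.mp hc'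
  have hhx : (h *ᵥ x) i = h i i * x i := Fintype.sum_subsingleton _ i
  rw [Subsingleton.elim j i, hhx] at hj
  exact pos_of_mul_pos_right ((hhx ▸ hc i).lt_of_ne hj.symm) (hdiag i).le

section Jacobian

variable {k : ℕ} {Y : Matrix (Fin k) (Fin k) ℝ}

theorem hmat_apply (l : Fin k → ℝ) (i j : Fin k) : hmat Y l i j = (l i + l j) / 2 * Y i j := by
  simp only [hmat, Matrix.smul_apply, Matrix.add_apply, diagonal_mul, mul_diagonal, smul_eq_mul]
  ring

theorem isSymm_hmat (hY : Y.IsSymm) (l : Fin k → ℝ) : (hmat Y l).IsSymm :=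
  IsSymm.ext fun i j => by rw [hmat_apply, hmat_apply, hY.apply, add_comm]

theorem isZmat_hmat (hZ : IsZmat Y) {l : Fin k → ℝ} (hl : 0 ≤ l) : IsZmat (hmat Y l) :=
  fun i j hij => by
    rw [hmat_apply]
    exact mul_nonpos_of_nonneg_of_nonpos (div_nonneg (add_nonneg (hl i) (hl j)) zero_le_two)
      (hZ i j hij)

theorem isIrred_hmat (hirr : IsIrred Y) {l : Fin k → ℝ} (hl : ∀ i, 0 < l i) :
    IsIrred (hmat Y l) :=
  hirr.of_offDiag fun i j _ hij => by
    rw [hmat_apply]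
    exact mul_ne_zero (by linarith [hl i, hl j]) hij

theorem neg_Jmat_transpose (hY : Y.IsSymm) (Vs x : Fin k → ℝ) :
    (-(Jmat Y Vs x))ᵀ = Y * diagonal x - diagonal (Y *ᵥ (Vs - x)) := by
  rw [Jmat, neg_sub, transpose_sub, transpose_mul, diagonal_transpose, diagonal_transpose, hY.eq]

theorem mul_diagonal_sub_diagonal_apply_of_ne {x d : Fin k → ℝ} {i j : Fin k} (hij : i ≠ j) :
    (Y * diagonal x - diagonal d) i j = Y i j * x j := by
  simp [mul_diagonal, diagonal_apply_ne _ hij]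

theorem isZmat_mul_diagonal_sub_diagonal (hZ : IsZmat Y) {x : Fin k → ℝ} (hx : 0 ≤ x)
    (d : Fin k → ℝ) : IsZmat (Y * diagonal x - diagonal d) := fun i j hij => by
  rw [mul_diagonal_sub_diagonal_apply_of_ne hij]
  exact mul_nonpos_of_nonpos_of_nonneg (hZ i j hij) (hx j)

theorem isIrred_mul_diagonal_sub_diagonal (hirr : IsIrred Y) {x : Fin k → ℝ}
    (hx : ∀ i, 0 < x i) (d : Fin k → ℝ) : IsIrred (Y * diagonal x - diagonal d) :=
  hirr.of_offDiag fun i j hij hY => by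
    rw [mul_diagonal_sub_diagonal_apply_of_ne hij]
    exact mul_ne_zero hY (hx j).ne'

theorem pos_of_isIrred_mul_diagonal_sub_diagonal [Nontrivial (Fin k)] (hZ : IsZmat Y)
    {x d : Fin k → ℝ} (hirr : IsIrred (Y * diagonal x - diagonal d))
    (hAZ : IsZmat (Y * diagonal x - diagonal d)) (j : Fin k) : 0 < x j := by
  obtain ⟨i₀, hi₀⟩ := exists_ne j
  obtain ⟨i, hij, hne⟩ := hirr.exists_ne_apply_ne_zero hi₀
  have hle := hAZ i j hij
  rw [mul_diagonal_sub_diagonal_apply_of_ne hij] at hne hle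
  by_contra! hx
  exact hne (le_antisymm hle (mul_nonneg_of_nonpos_of_nonpos (hZ i j hij) hx))

theorem mul_diagonal_sub_diagonal_mulVec_eq_smul_iff (Vs x l : Fin k → ℝ) (r : ℝ) :
    (Y * diagonal x - diagonal (Y *ᵥ (Vs - x))) *ᵥ l = r • l ↔
      hmat Y l *ᵥ x = (1 / 2 : ℝ) • (diagonal l *ᵥ (Y *ᵥ Vs + r • 1)) := by
  have hdiag (a b : Fin k → ℝ) : diagonal a *ᵥ b = a * b := funext (mulVec_diagonal a b)
  have key : ∀ i, ((Y * diagonal x - diagonal (Y *ᵥ (Vs - x))) *ᵥ l) i - r * l i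
      = 2 * (hmat Y l *ᵥ x) i - l i * ((Y *ᵥ Vs) i + r) := fun i => by
    simp only [hmat, sub_mulVec, smul_mulVec, add_mulVec, ← mulVec_mulVec, hdiag, mulVec_sub,
      Pi.sub_apply, Pi.add_apply, Pi.smul_apply, Pi.mul_apply, smul_eq_mul, mul_comm x l]
    ring
  simp only [funext_iff, Pi.smul_apply, hdiag, Pi.mul_apply, Pi.add_apply, Pi.one_apply,
    smul_eq_mul, mul_one]
  exact forall_congr' fun i => by constructor <;> intro h <;> linarith [key i]

theorem half_smul_diagonal_mulVec_add_smul_one_nonneg_ne_zero {l v : Fin k → ℝ}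
    (hl : ∀ i, 0 < l i) (hv : 0 ≤ v) (hv' : v ≠ 0) {r : ℝ} (hr : 0 ≤ r) :
    0 ≤ (1 / 2 : ℝ) • (diagonal l *ᵥ (v + r • 1)) ∧
      (1 / 2 : ℝ) • (diagonal l *ᵥ (v + r • 1)) ≠ 0 := by
  simp only [Pi.le_def, ne_eq, funext_iff, not_forall, Pi.smul_apply, mulVec_diagonal,
    Pi.add_apply, Pi.one_apply, Pi.zero_apply, smul_eq_mul, mul_one] at hv hv' ⊢
  obtain ⟨i, hi⟩ := hv'
  refine ⟨fun j => by have := hv j; have := hl j; positivity, i, ?_⟩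
  have := (hv i).lt_of_ne (Ne.symm hi)
  have := hl i
  positivity

theorem eq_PhiD_iff {Vs l x : Fin k → ℝ} {r : ℝ} (hh : IsUnit (hmat Y l).det) :
    x = PhiD Y Vs l r ↔ hmat Y l *ᵥ x = (1 / 2 : ℝ) • (diagonal l *ᵥ (Y *ᵥ Vs + r • 1)) := by
  rw [PhiD, ← mulVec_smul]
  constructor
  · rintro rfl
    rw [mulVec_mulVec, mul_nonsing_inv _ hh, one_mulVec]
  · intro he
    rw [← he, mulVec_mulVec, nonsing_inv_mul _ hh, one_mulVec]

end Jacobian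

theorem stmt_7_general (n : ℕ)
    (Y : Matrix (Fin n) (Fin n) ℝ)
    (hPD : Y.PosDef)
    (hZ : IsZmat Y)
    (hirr : IsIrred Y)
    (Vs : Fin n → ℝ)
    (hInn : ∀ i, 0 ≤ (Y *ᵥ Vs) i) (hIne : Y *ᵥ Vs ≠ 0)
    (r : ℝ) (hr : 0 ≤ r) (l : Fin n → ℝ) (hl : ∀ i, 0 < l i) (x : Fin n → ℝ) :
    ((IsIrred (-(Jmat Y Vs x))ᵀ ∧ IsMmat (-(Jmat Y Vs x))ᵀ ∧
        (-(Jmat Y Vs x))ᵀ *ᵥ l = r • l) ↔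
      ((hmat Y l).PosDef ∧ x = PhiD Y Vs l r)) ∧
    (((hmat Y l).PosDef ∧ x = PhiD Y Vs l r) → ∀ i, 0 < x i) := by
  have hY : Y.IsSymm := isHermitian_iff_isSymm.mp hPD.isHermitian
  rw [neg_Jmat_transpose hY]
  have heig := mul_diagonal_sub_diagonal_mulVec_eq_smul_iff (Y := Y) Vs x l r
  have hsolve (hh : (hmat Y l).PosDef) := eq_PhiD_iff (Vs := Vs) (x := x) (r := r)
    ((isUnit_iff_isUnit_det _).mp hh.isUnit)
  obtain ⟨hc, hc'⟩ := half_smul_diagonal_mulVec_add_smul_one_nonneg_ne_zero hl hInn hIne hr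
  set c := (1 / 2 : ℝ) • (diagonal l *ᵥ (Y *ᵥ Vs + r • 1))
  have hhZ := isZmat_hmat hZ fun i => (hl i).le
  have hhirr := isIrred_hmat hirr hl
  have hpos (hh : (hmat Y l).PosDef) (he : hmat Y l *ᵥ x = c) : ∀ i, 0 < x i :=
    pos_of_posDef_of_mulVec_nonneg hh hhZ hhirr (he ▸ hc) (he ▸ hc')
  refine ⟨⟨fun ⟨hA, ⟨hAZ, _⟩, hperron⟩ => ?_, fun ⟨hh, hx⟩ => ?_⟩,
    fun ⟨hh, hx⟩ => hpos hh ((hsolve hh).mp hx)⟩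
  · have he := heig.mp hperron
    have hx : ∀ i, 0 < x i := by
      -- for `n ≤ 1` irreducibility is vacuous and `h(λ) x = c` is a scalar equation
      rcases subsingleton_or_nontrivial (Fin n) with _ | _
      · refine pos_of_mulVec_nonneg_of_subsingleton (fun i => ?_) (he ▸ hc) (he ▸ hc')
        rw [hmat_apply]
        exact mul_pos (by linarith [hl i]) hPD.diag_pos
      · exact pos_of_isIrred_mul_diagonal_sub_diagonal hZ hA hAZ
    have hh := posDef_of_pos_of_mulVec_nonneg (isSymm_hmat hY l) hhZ hhirr hx (he ▸ hc)
      (he ▸ hc')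
    exact ⟨hh, (hsolve hh).mpr he⟩
  · have he := (hsolve hh).mp hx
    have hxpos := hpos hh he
    have hAZ := isZmat_mul_diagonal_sub_diagonal hZ (fun i => (hxpos i).le) (Y *ᵥ (Vs - x))
    exact ⟨isIrred_mul_diagonal_sub_diagonal hirr hxpos _, ⟨hAZ, fun μ hμ =>
      hr.trans (le_re_of_mem_spectrum_of_mulVec_eq_smul hAZ hl (heig.mpr he) hμ)⟩, heig.mpr he⟩

theorem stmt_7 (n : ℕ) (hn : 1 ≤ n)
    (Y : Matrix (Fin n) (Fin n) ℝ)
    (hPD : Y.PosDef)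
    (hZ : IsZmat Y)
    (hirr : IsIrred Y)
    (Vs : Fin n → ℝ) (hVs : ∀ i, 0 < Vs i)
    (hInn : ∀ i, 0 ≤ (Y *ᵥ Vs) i) (hIne : Y *ᵥ Vs ≠ 0)
    (r : ℝ) (hr : 0 ≤ r) (l : Fin n → ℝ) (hl : ∀ i, 0 < l i) (x : Fin n → ℝ) :
    ((IsIrred (-(Jmat Y Vs x))ᵀ ∧ IsMmat (-(Jmat Y Vs x))ᵀ ∧
        (-(Jmat Y Vs x))ᵀ *ᵥ l = r • l) ↔
      ((hmat Y l).PosDef ∧ x = PhiD Y Vs l r)) ∧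
    (((hmat Y l).PosDef ∧ x = PhiD Y Vs l r) → ∀ i, 0 < x i) :=
  stmt_7_general n Y hPD hZ hirr Vs hInn hIne r hr l hl x
end
end

section
/- The closure of D equals {x ∈ ℝⁿ : x has all entries positive and −J(x) is an M-matrix}, and the boundary of D equals {x ∈ ℝⁿ : x has all entries positive and −J(x) is a singular M-matrix}. -/
open Matrix Set

noncomputable section

/-!
For `x > 0` the matrix `-J(x) = [x] Y + [Y x] - [I*]` is an irreducible Z-matrix, and such a
matrix `A` is controlled by its positive witnesses, vectors `w > 0` with `A w ≥ 0`. A witness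
confines the spectrum to the closed right half plane (Gershgorin for `diag(w)⁻¹ A diag(w)`),
and a minimum principle along `w` shows that `A` is nonsingular with a positive inverse as soon
as `A w ≠ 0`. Conversely an M-matrix has a witness: witnesses of `A + t I` persist from large
`t` down to `t = 0`, by connectedness and compactness of the simplex. Hence `D` is the open set
of `x > 0` where `-J(x)` has a strict witness. Replacing `x` by `t x` with `t > 1` adds
`(t - 1) [I*]` to `t (-J(x))`, so every `x > 0` with `-J(x)` an M-matrix is a limit of points
of `D`. Conversely, limits of points of `D` keep a witness normalized in the simplex and a
nonnegative diagonal, and `I* ≥ 0`, `I* ≠ 0` with irreducibility keep them off the coordinate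
hyperplanes.
-/

section ZMatrix

variable {k : ℕ} {A : Matrix (Fin k) (Fin k) ℝ}

theorem exists_pos_mulVec_pos_of_inv_apply_pos [Nonempty (Fin k)] (hdet : A.det ≠ 0)
    (hinv : ∀ i j, 0 < A⁻¹ i j) : ∃ w : Fin k → ℝ, (∀ i, 0 < w i) ∧ ∀ i, 0 < (A *ᵥ w) i := by
  refine ⟨A⁻¹ *ᵥ 1, fun i => ?_, fun i => ?_⟩
  · simpa [mulVec, dotProduct] using Finset.sum_pos (fun j _ => hinv i j) Finset.univ_nonempty
  · simp [mulVec_mulVec, mul_nonsing_inv _ (isUnit_iff_ne_zero.2 hdet)]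

theorem exists_mem_stdSimplex_mulVec_nonneg [Nonempty (Fin k)] {w : Fin k → ℝ}
    (hw : ∀ i, 0 < w i) (hAw : ∀ i, 0 ≤ (A *ᵥ w) i) :
    ∃ u ∈ stdSimplex ℝ (Fin k), ∀ i, 0 ≤ (A *ᵥ u) i := by
  have hs : 0 < ∑ i, w i := Finset.sum_pos (fun i _ => hw i) Finset.univ_nonempty
  refine ⟨(∑ i, w i)⁻¹ • w, ⟨fun i => smul_nonneg (inv_nonneg.2 hs.le) (hw i).le, ?_⟩,
    fun i => ?_⟩
  · simp [← Finset.mul_sum, hs.ne']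
  · rw [mulVec_smul]
    exact smul_nonneg (inv_nonneg.2 hs.le) (hAw i)

theorem isClosed_setOf_exists_stdSimplex_mulVec_nonneg {X : Type*} [TopologicalSpace X]
    {M : X → Matrix (Fin k) (Fin k) ℝ} (hM : Continuous M) :
    IsClosed {x | ∃ u ∈ stdSimplex ℝ (Fin k), ∀ i, 0 ≤ (M x *ᵥ u) i} := by
  have : CompactSpace (stdSimplex ℝ (Fin k)) :=
    isCompact_iff_compactSpace.mp (isCompact_stdSimplex _ _)
  set E := {p : stdSimplex ℝ (Fin k) × X | ∀ i, 0 ≤ (M p.2 *ᵥ p.1.val) i}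
  have hE : IsClosed E := by
    simp only [E, ofPred_forall]
    exact isClosed_iInter fun i => isClosed_le continuous_const (by fun_prop)
  convert isClosedMap_snd_of_compactSpace E hE using 1
  ext x
  simp [E]

theorem det_add_smul_one_ne_zero
    (hA : ∀ μ ∈ spectrum ℂ (A.map Complex.ofReal), 0 ≤ μ.re) {t : ℝ} (ht : 0 < t) :
    (A + t • 1).det ≠ 0 := by
  intro hdet
  have hshift : algebraMap ℂ (Matrix (Fin k) (Fin k) ℂ) (-t) - A.map Complex.ofReal =
      -(A + t • 1).map Complex.ofReal := by
    ext i j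
    rcases eq_or_ne i j with rfl | hij <;> simp [algebraMap_matrix_apply, one_apply, *]
    ring
  have hmem : ((-t : ℝ) : ℂ) ∈ spectrum ℂ (A.map Complex.ofReal) := by
    rw [spectrum.mem_iff, Complex.ofReal_neg, hshift, IsUnit.neg_iff, isUnit_iff_isUnit_det]
    change ¬IsUnit (Complex.ofRealHom.mapMatrix (A + t • 1)).det
    rw [← RingHom.map_det, hdet]
    simp
  have := hA _ hmem
  simp only [Complex.ofReal_re] at this
  linarith

theorem neg_sum_erase_le_of_mulVec_apply_nonneg {w : Fin k → ℝ} {i : Fin k}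
    (hAw : 0 ≤ (A *ᵥ w) i) : -∑ j ∈ Finset.univ.erase i, A i j * w j ≤ A i i * w i := by
  have := Finset.add_sum_erase _ (fun j => A i j * w j) (Finset.mem_univ i)
  simp only [mulVec, dotProduct] at hAw
  linarith

theorem IsIrred.add_smul_one (hirr : IsIrred A) (t : ℝ) : IsIrred (A + t • 1) := by
  intro α hα hαu
  obtain ⟨i, hi, j, hj, hij⟩ := hirr α hα hαu
  have hne : i ≠ j := fun h => Finset.mem_compl.mp hj (h ▸ hi)
  exact ⟨i, hi, j, hj, by simpa [one_apply_ne hne] using hij⟩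

namespace IsZmat

theorem add_smul_one (hZ : IsZmat A) (t : ℝ) : IsZmat (A + t • 1) := by
  intro i j hij
  simpa [one_apply_ne hij] using hZ i j hij

theorem diag_nonneg (hZ : IsZmat A) {w : Fin k → ℝ} (hw : ∀ i, 0 < w i)
    (hAw : ∀ i, 0 ≤ (A *ᵥ w) i) (i : Fin k) : 0 ≤ A i i := by
  have hoff : ∑ j ∈ Finset.univ.erase i, A i j * w j ≤ 0 := Finset.sum_nonpos fun j hj =>
    mul_nonpos_of_nonpos_of_nonneg (hZ i j (Finset.ne_of_mem_erase hj).symm) (hw j).le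
  exact nonneg_of_mul_nonneg_left
    (by linarith [neg_sum_erase_le_of_mulVec_apply_nonneg (hAw i)]) (hw i)

/-- Weighted Gershgorin: with `D = diag w`, every row of `D⁻¹ A D` has radius at most its
diagonal entry. -/
theorem re_nonneg_of_mem_spectrum (hZ : IsZmat A) {w : Fin k → ℝ} (hw : ∀ i, 0 < w i)
    (hAw : ∀ i, 0 ≤ (A *ᵥ w) i) {μ : ℂ} (hμ : μ ∈ spectrum ℂ (A.map Complex.ofReal)) :
    0 ≤ μ.re := by
  classical
  obtain ⟨v, hv, hv0⟩ := (Module.End.hasEigenvalue_iff_mem_spectrum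
    (f := toLin' (A.map Complex.ofReal)).mpr (by rwa [spectrum_toLin'])).exists_hasEigenvector
  have hAv := congrFun (Module.End.mem_eigenspace_iff.mp hv)
  set B : Matrix (Fin k) (Fin k) ℂ := of fun i j => ((A i j * w j / w i : ℝ) : ℂ)
  have hB : Module.End.HasEigenvalue (toLin' B) μ := by
    refine Module.End.hasEigenvalue_of_hasEigenvector (x := fun j => v j / w j)
      ⟨Module.End.mem_eigenspace_iff.mpr (funext fun i => ?_), fun h => hv0 (funext fun j => ?_)⟩
    · have hwi : (w i : ℂ) ≠ 0 := Complex.ofReal_ne_zero.mpr (hw i).ne'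
      specialize hAv i
      simp only [toLin'_apply, mulVec, dotProduct, map_apply, Pi.smul_apply, smul_eq_mul,
        B, of_apply] at hAv ⊢
      rw [← mul_div_assoc, ← hAv, Finset.sum_div]
      refine Finset.sum_congr rfl fun j _ => ?_
      have hwj : (w j : ℂ) ≠ 0 := Complex.ofReal_ne_zero.mpr (hw j).ne'
      push_cast
      field_simp
    · simpa [(hw j).ne'] using congrFun h j
  obtain ⟨i, hi⟩ := eigenvalue_mem_ball hB
  rw [mem_closedBall_iff_norm'] at hi
  have hrow : ∑ j ∈ Finset.univ.erase i, ‖B i j‖ ≤ A i i := by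
    have hnorm : ∀ j ∈ Finset.univ.erase i, ‖B i j‖ = -(A i j * w j) / w i := fun j hj => by
      rw [show B i j = ((A i j * w j / w i : ℝ) : ℂ) from rfl, Complex.norm_real,
        Real.norm_eq_abs, abs_of_nonpos, neg_div]
      exact div_nonpos_of_nonpos_of_nonneg (mul_nonpos_of_nonpos_of_nonneg
        (hZ i j (Finset.ne_of_mem_erase hj).symm) (hw j).le) (hw i).le
    rw [Finset.sum_congr rfl hnorm, ← Finset.sum_div, div_le_iff₀ (hw i),
      Finset.sum_neg_distrib]
    exact neg_sum_erase_le_of_mulVec_apply_nonneg (hAw i)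
  have hBii : B i i = A i i := by simp [B, (hw i).ne']
  have hre : A i i - μ.re ≤ ‖B i i - μ‖ := by
    simpa [hBii] using Complex.re_le_norm (B i i - μ)
  linarith

theorem pos_of_nonneg_of_ne_zero (hZ : IsZmat A) (hirr : IsIrred A) {u : Fin k → ℝ}
    (hu : ∀ i, 0 ≤ u i) (hu0 : u ≠ 0) (hAu : ∀ i, u i = 0 → 0 ≤ (A *ᵥ u) i) :
    ∀ i, 0 < u i := by
  classical
  by_contra! h
  obtain ⟨i₀, hi₀⟩ := h
  set α := Finset.univ.filter fun i => u i = 0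
  have hα : α.Nonempty := ⟨i₀, by simpa [α] using le_antisymm hi₀ (hu i₀)⟩
  have hαu : α ≠ Finset.univ := fun h => hu0 <| funext fun j => by
    simpa [α] using Finset.eq_univ_iff_forall.mp h j
  obtain ⟨i, hi, j, hj, hij⟩ := hirr α hα hαu
  simp only [α, Finset.mem_compl, Finset.mem_filter, Finset.mem_univ, true_and] at hi hj
  -- every term of `(A u) i = ∑ l, A i l * u l` is nonpositive, yet the sum is nonnegative
  have hterm : ∀ l ∈ Finset.univ, A i l * u l ≤ 0 := fun l _ => by
    rcases eq_or_ne l i with rfl | hl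
    · simp [hi]
    · exact mul_nonpos_of_nonpos_of_nonneg (hZ i l hl.symm) (hu l)
  have hsum : ∑ l, A i l * u l = 0 := le_antisymm (Finset.sum_nonpos hterm) (hAu i hi)
  exact mul_ne_zero hij hj
    ((Finset.sum_eq_zero_iff_of_nonpos hterm).mp hsum j (Finset.mem_univ j))

theorem pos_of_mem_stdSimplex (hZ : IsZmat A) (hirr : IsIrred A) {u : Fin k → ℝ}
    (hu : u ∈ stdSimplex ℝ (Fin k)) (hAu : ∀ i, 0 ≤ (A *ᵥ u) i) : ∀ i, 0 < u i :=
  hZ.pos_of_nonneg_of_ne_zero hirr hu.1 (fun h => by simpa [h] using hu.2) fun i _ => hAu i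

/-- Minimum principle: shift `z` by the least multiple of `w` making it nonnegative; the
result vanishes somewhere, so by `pos_of_nonneg_of_ne_zero` it vanishes everywhere. -/
theorem nonneg_or_eq_smul (hZ : IsZmat A) (hirr : IsIrred A) {w z : Fin k → ℝ}
    (hw : ∀ i, 0 < w i) (hAw : ∀ i, 0 ≤ (A *ᵥ w) i) (hAz : ∀ i, 0 ≤ (A *ᵥ z) i) :
    (∀ i, 0 ≤ z i) ∨ ∃ c : ℝ, c < 0 ∧ z = c • w := by
  by_cases hz : ∀ i, 0 ≤ z i
  · exact Or.inl hz
  right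
  obtain ⟨i₁, hi₁⟩ := not_forall.mp hz
  replace hi₁ := not_le.mp hi₁
  obtain ⟨i₀, -, hmax⟩ := Finset.univ.exists_max_image (fun i => -z i / w i)
    ⟨i₁, Finset.mem_univ _⟩
  set m := -z i₀ / w i₀
  have hm : 0 < m := (div_pos (neg_pos.2 hi₁) (hw i₁)).trans_le (hmax i₁ (Finset.mem_univ _))
  have hv : ∀ i, 0 ≤ (z + m • w) i := fun i => by
    have := (div_le_iff₀ (hw i)).mp (hmax i (Finset.mem_univ _))
    simp only [Pi.add_apply, Pi.smul_apply, smul_eq_mul]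
    linarith
  have hv₀ : (z + m • w) i₀ = 0 := by
    simp only [Pi.add_apply, Pi.smul_apply, smul_eq_mul, m]
    field_simp [(hw i₀).ne']
    ring
  have hAv : ∀ i, 0 ≤ (A *ᵥ (z + m • w)) i := fun i => by
    simp only [mulVec_add, mulVec_smul, Pi.add_apply, Pi.smul_apply, smul_eq_mul]
    exact add_nonneg (hAz i) (mul_nonneg hm.le (hAw i))
  have hzero : z + m • w = 0 := by
    by_contra hne
    exact (hZ.pos_of_nonneg_of_ne_zero hirr hv hne (fun i _ => hAv i) i₀).ne' hv₀
  exact ⟨-m, neg_lt_zero.2 hm, by rw [neg_smul, eq_neg_iff_add_eq_zero, hzero]⟩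

theorem det_ne_zero (hZ : IsZmat A) (hirr : IsIrred A) {w : Fin k → ℝ} (hw : ∀ i, 0 < w i)
    (hAw : ∀ i, 0 ≤ (A *ᵥ w) i) (hAw0 : A *ᵥ w ≠ 0) : A.det ≠ 0 := by
  classical
  intro hdet
  obtain ⟨v, hv0, hAv⟩ := exists_mulVec_eq_zero_iff.mpr hdet
  have hker : ∀ z, A *ᵥ z = 0 → ∀ i, 0 ≤ z i := fun z hz => by
    refine (hZ.nonneg_or_eq_smul hirr hw hAw (by simp [hz])).resolve_right ?_
    rintro ⟨c, hc, rfl⟩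
    rw [mulVec_smul, smul_eq_zero] at hz
    exact hAw0 (hz.resolve_left hc.ne)
  exact hv0 <| funext fun i => le_antisymm
    (by simpa using hker (-v) (by simp [mulVec_neg, hAv]) i) (hker v hAv i)

theorem inv_apply_pos (hZ : IsZmat A) (hirr : IsIrred A) {w : Fin k → ℝ} (hw : ∀ i, 0 < w i)
    (hAw : ∀ i, 0 ≤ (A *ᵥ w) i) (hdet : A.det ≠ 0) (i j : Fin k) : 0 < A⁻¹ i j := by
  classical
  have hcol : A *ᵥ (A⁻¹ *ᵥ Pi.single j 1) = Pi.single j 1 := by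
    rw [mulVec_mulVec, mul_nonsing_inv _ (isUnit_iff_ne_zero.2 hdet), one_mulVec]
  have hsingle : ∀ l, 0 ≤ (Pi.single j 1 : Fin k → ℝ) l := fun l => by
    rcases eq_or_ne l j with rfl | hl <;> simp [*]
  have hnonneg : ∀ l, 0 ≤ (A⁻¹ *ᵥ Pi.single j 1) l := by
    refine (hZ.nonneg_or_eq_smul hirr hw hAw (by rwa [hcol])).resolve_right ?_
    rintro ⟨c, hc, hz⟩
    have := congrFun hcol j
    rw [hz, mulVec_smul] at this
    rw [Pi.smul_apply, smul_eq_mul, Pi.single_eq_same] at this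
    nlinarith [hAw j]
  have hpos := hZ.pos_of_nonneg_of_ne_zero hirr hnonneg
    (fun h => by simpa [h] using congrFun hcol j) (fun l _ => by rw [hcol]; exact hsingle l)
  simpa [mulVec_single_one] using hpos i

/-- The strictly witnessed shifts `t` form an open set, closed in `(0, ∞)` because a weak
witness of a nonsingular irreducible Z-matrix already forces a positive inverse; so all `t > 0`
are witnessed, and by compactness of the simplex so is `t = 0`. -/
theorem exists_pos_mulVec_nonneg [Nonempty (Fin k)] (hZ : IsZmat A) (hirr : IsIrred A)
    (hdet : ∀ t : ℝ, 0 < t → (A + t • 1).det ≠ 0) :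
    ∃ u : Fin k → ℝ, (∀ i, 0 < u i) ∧ ∀ i, 0 ≤ (A *ᵥ u) i := by
  set T := {t : ℝ | ∃ w : Fin k → ℝ, (∀ i, 0 < w i) ∧ ∀ i, 0 < ((A + t • 1) *ᵥ w) i}
  set S := {t : ℝ | ∃ u ∈ stdSimplex ℝ (Fin k), ∀ i, 0 ≤ ((A + t • 1) *ᵥ u) i}
  have hS : IsClosed S := isClosed_setOf_exists_stdSimplex_mulVec_nonneg (by fun_prop)
  have hTS : T ⊆ S := fun t ⟨w, hw, hAw⟩ =>
    exists_mem_stdSimplex_mulVec_nonneg hw fun i => (hAw i).le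
  have hmulVec : ∀ (t : ℝ) (w : Fin k → ℝ) i, ((A + t • 1) *ᵥ w) i = (A *ᵥ w) i + t * w i :=
    fun t w i => by simp [add_mulVec, smul_mulVec]
  have hT : IsOpen T := by
    simp only [T, ofPred_exists, ofPred_and, ofPred_forall, hmulVec]
    exact isOpen_iUnion fun w => (isOpen_iInter_of_finite fun i => isOpen_const).inter <|
      isOpen_iInter_of_finite fun i => isOpen_lt continuous_const (by fun_prop)
  set c := 1 + ∑ i, |(A *ᵥ 1) i|
  have hTne : (Ioi 0 ∩ T).Nonempty := by
    refine ⟨c, mem_Ioi.mpr (by positivity), 1, fun _ => one_pos, fun i => ?_⟩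
    have := (neg_le_abs _).trans (Finset.single_le_sum (fun j _ => abs_nonneg ((A *ᵥ 1) j))
      (Finset.mem_univ i))
    rw [hmulVec]
    simp only [Pi.one_apply, mul_one, c]
    linarith
  have hclosure : closure T ∩ Ioi 0 ⊆ T := by
    rintro t ⟨htT, ht⟩
    obtain ⟨u, hu, hAu⟩ := hS.closure_subset_iff.mpr hTS htT
    have hupos := (hZ.add_smul_one t).pos_of_mem_stdSimplex (hirr.add_smul_one t) hu hAu
    exact exists_pos_mulVec_pos_of_inv_apply_pos (hdet t ht)
      ((hZ.add_smul_one t).inv_apply_pos (hirr.add_smul_one t) hupos hAu (hdet t ht))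
  have hpos : Ioi 0 ⊆ S :=
    (isPreconnected_Ioi.subset_of_closure_inter_subset hT hTne hclosure).trans hTS
  obtain ⟨u, hu, hAu⟩ : (0 : ℝ) ∈ S :=
    hS.closure_subset_iff.mpr hpos (by rw [closure_Ioi]; exact self_mem_Ici)
  simp only [zero_smul, add_zero] at hAu
  exact ⟨u, hZ.pos_of_mem_stdSimplex hirr hu hAu, hAu⟩

theorem isMmat_iff [Nonempty (Fin k)] (hZ : IsZmat A) (hirr : IsIrred A) :
    IsMmat A ↔ ∃ u : Fin k → ℝ, (∀ i, 0 < u i) ∧ ∀ i, 0 ≤ (A *ᵥ u) i :=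
  ⟨fun h => hZ.exists_pos_mulVec_nonneg hirr fun _ => det_add_smul_one_ne_zero h.2,
    fun ⟨_, hu, hAu⟩ => ⟨hZ, fun _ => hZ.re_nonneg_of_mem_spectrum hu hAu⟩⟩

theorem inv_apply_pos_iff [Nonempty (Fin k)] (hZ : IsZmat A) (hirr : IsIrred A) :
    (A.det ≠ 0 ∧ ∀ i j, 0 < A⁻¹ i j) ↔
      ∃ w : Fin k → ℝ, (∀ i, 0 < w i) ∧ ∀ i, 0 < (A *ᵥ w) i := by
  refine ⟨fun h => exists_pos_mulVec_pos_of_inv_apply_pos h.1 h.2, fun ⟨w, hw, hAw⟩ => ?_⟩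
  have hdet := hZ.det_ne_zero hirr hw (fun i => (hAw i).le)
    fun h => (hAw (Classical.arbitrary _)).ne' (by simp [h])
  exact ⟨hdet, hZ.inv_apply_pos hirr hw (fun i => (hAw i).le) hdet⟩

end IsZmat

end ZMatrix

open Filter Topology

section Jacobian

variable {n : ℕ} {Y : Matrix (Fin n) (Fin n) ℝ} {Vs x : Fin n → ℝ}

theorem neg_Jmat_apply_of_ne {i j : Fin n} (hij : i ≠ j) :
    (-(Jmat Y Vs x)) i j = x i * Y i j := by
  simp [Jmat, diagonal_apply_ne _ hij, diagonal_mul]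

theorem neg_Jmat_apply_self (i : Fin n) :
    (-(Jmat Y Vs x)) i i = x i * Y i i + (Y *ᵥ x) i - (Y *ᵥ Vs) i := by
  simp [Jmat, diagonal_mul, mulVec_sub]
  ring

theorem neg_Jmat_smul (t : ℝ) :
    -(Jmat Y Vs (t • x)) = t • -(Jmat Y Vs x) + (t - 1) • diagonal (Y *ᵥ Vs) := by
  ext i j
  rcases eq_or_ne i j with rfl | hij
  · simp only [Matrix.add_apply, Matrix.smul_apply, smul_eq_mul, neg_Jmat_apply_self,
      diagonal_apply_eq, mulVec_smul, Pi.smul_apply]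
    ring
  · simp only [Matrix.add_apply, Matrix.smul_apply, smul_eq_mul, neg_Jmat_apply_of_ne hij,
      diagonal_apply_ne _ hij, Pi.smul_apply]
    ring

theorem continuous_Jmat : Continuous (Jmat Y Vs) := by
  unfold Jmat
  fun_prop

theorem isZmat_neg_Jmat (hZ : IsZmat Y) (hx : ∀ i, 0 ≤ x i) :
    IsZmat (-(Jmat Y Vs x)) := fun i j hij => by
  rw [neg_Jmat_apply_of_ne hij]
  exact mul_nonpos_of_nonneg_of_nonpos (hx i) (hZ i j hij)

theorem isIrred_neg_Jmat (hirr : IsIrred Y) (hx : ∀ i, 0 < x i) :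
    IsIrred (-(Jmat Y Vs x)) := fun α hα hαu => by
  obtain ⟨i, hi, j, hj, hij⟩ := hirr α hα hαu
  have hne : i ≠ j := fun h => Finset.mem_compl.mp hj (h ▸ hi)
  exact ⟨i, hi, j, hj, by rw [neg_Jmat_apply_of_ne hne]; exact mul_ne_zero (hx i).ne' hij⟩

/-- Where `x i = 0` the diagonal entry of `-J(x)` is `(Y x) i - I* i`, so `Y x ≥ I* ≥ 0` there. -/
theorem pos_of_neg_Jmat_diag_nonneg (hZ : IsZmat Y) (hirr : IsIrred Y)
    (hInn : ∀ i, 0 ≤ (Y *ᵥ Vs) i) (hIne : Y *ᵥ Vs ≠ 0) (hx : ∀ i, 0 ≤ x i)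
    (hdiag : ∀ i, 0 ≤ (-(Jmat Y Vs x)) i i) : ∀ i, 0 < x i := by
  have hYx : ∀ i, x i = 0 → (Y *ᵥ Vs) i ≤ (Y *ᵥ x) i := fun i hi => by
    have := hdiag i
    rw [neg_Jmat_apply_self, hi] at this
    linarith
  refine hZ.pos_of_nonneg_of_ne_zero hirr hx (fun h => hIne ?_)
    fun i hi => (hInn i).trans (hYx i hi)
  funext i
  exact le_antisymm (by simpa [h] using hYx i (by simp [h])) (hInn i)

end Jacobian

section StableSet

variable {n : ℕ} {Y : Matrix (Fin n) (Fin n) ℝ} {Vs : Fin n → ℝ}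

theorem mem_Dset_iff {x : Fin n → ℝ} : x ∈ Dset Y Vs ↔
    (∀ i, 0 < x i) ∧ (-(Jmat Y Vs x)).det ≠ 0 ∧ ∀ i j, 0 < (-(Jmat Y Vs x))⁻¹ i j := by
  have hdet : (-(Jmat Y Vs x)).det ≠ 0 ↔ IsUnit (Jmat Y Vs x).det := by
    rw [det_neg, isUnit_iff_ne_zero, mul_ne_zero_iff, and_iff_right (pow_ne_zero _ (by norm_num))]
  refine and_congr_right fun _ => ?_
  rw [hdet]
  refine and_congr_right fun h => ?_
  rw [inv_eq_left_inv (A := -(Jmat Y Vs x)) (B := -(Jmat Y Vs x)⁻¹)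
    (by rw [neg_mul_neg, nonsing_inv_mul _ h])]
  simp

theorem Dset_eq [Nonempty (Fin n)] (hZ : IsZmat Y) (hirr : IsIrred Y) :
    Dset Y Vs = {x | (∀ i, 0 < x i) ∧
      ∃ w : Fin n → ℝ, (∀ i, 0 < w i) ∧ ∀ i, 0 < (-(Jmat Y Vs x) *ᵥ w) i} := by
  ext x
  rw [mem_Dset_iff, mem_ofPred_eq]
  exact and_congr_right fun hx =>
    (isZmat_neg_Jmat hZ fun i => (hx i).le).inv_apply_pos_iff (isIrred_neg_Jmat hirr hx)

theorem isOpen_Dset [Nonempty (Fin n)] (hZ : IsZmat Y) (hirr : IsIrred Y) :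
    IsOpen (Dset Y Vs) := by
  have : Continuous (Jmat Y Vs) := continuous_Jmat
  rw [Dset_eq hZ hirr]
  simp only [ofPred_and, ofPred_exists, ofPred_forall]
  exact (isOpen_iInter_of_finite fun i => isOpen_lt continuous_const (continuous_apply i)).inter
    (isOpen_iUnion fun w => (isOpen_iInter_of_finite fun _ => isOpen_const).inter
      (isOpen_iInter_of_finite fun i => isOpen_lt continuous_const (by fun_prop)))

theorem closure_Dset_subset [Nonempty (Fin n)] (hZ : IsZmat Y) (hirr : IsIrred Y)
    (hInn : ∀ i, 0 ≤ (Y *ᵥ Vs) i) (hIne : Y *ᵥ Vs ≠ 0) :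
    closure (Dset Y Vs) ⊆ {x | (∀ i, 0 < x i) ∧ IsMmat (-(Jmat Y Vs x))} := by
  have : Continuous (Jmat Y Vs) := continuous_Jmat
  set C := {x : Fin n → ℝ | (∀ i, 0 ≤ x i) ∧ ∀ i, 0 ≤ (-(Jmat Y Vs x)) i i} ∩
    {x | ∃ u ∈ stdSimplex ℝ (Fin n), ∀ i, 0 ≤ (-(Jmat Y Vs x) *ᵥ u) i}
  have hC : IsClosed C := by
    refine IsClosed.inter ?_ (isClosed_setOf_exists_stdSimplex_mulVec_nonneg (by fun_prop))
    simp only [ofPred_and, ofPred_forall]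
    exact (isClosed_iInter fun i => isClosed_le continuous_const (continuous_apply i)).inter
      (isClosed_iInter fun i => isClosed_le continuous_const (by fun_prop))
  have hDC : Dset Y Vs ⊆ C := by
    rw [Dset_eq hZ hirr]
    rintro x ⟨hx, w, hw, hJw⟩
    exact ⟨⟨fun i => (hx i).le, (isZmat_neg_Jmat hZ fun i => (hx i).le).diag_nonneg hw
      fun i => (hJw i).le⟩, exists_mem_stdSimplex_mulVec_nonneg hw fun i => (hJw i).le⟩
  intro x hx
  obtain ⟨⟨hx0, hdiag⟩, u, hu, hJu⟩ := hC.closure_subset_iff.mpr hDC hx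
  have hxpos := pos_of_neg_Jmat_diag_nonneg hZ hirr hInn hIne hx0 hdiag
  have hZx := isZmat_neg_Jmat (Vs := Vs) hZ fun i => (hxpos i).le
  have hirrx := isIrred_neg_Jmat (Vs := Vs) hirr hxpos
  exact ⟨hxpos, (hZx.isMmat_iff hirrx).mpr ⟨u, hZx.pos_of_mem_stdSimplex hirrx hu hJu, hJu⟩⟩

/-- Scaling `x` by `t > 1` adds the diagonal `(t - 1) [I*]` to `t (-J(x))`, which turns a weak
witness into one with a strictly positive entry. -/
theorem subset_closure_Dset [Nonempty (Fin n)] (hZ : IsZmat Y) (hirr : IsIrred Y)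
    (hInn : ∀ i, 0 ≤ (Y *ᵥ Vs) i) (hIne : Y *ᵥ Vs ≠ 0) :
    {x | (∀ i, 0 < x i) ∧ IsMmat (-(Jmat Y Vs x))} ⊆ closure (Dset Y Vs) := by
  rintro x ⟨hx, hM⟩
  obtain ⟨u, hu, hJu⟩ :=
    ((isZmat_neg_Jmat hZ fun i => (hx i).le).isMmat_iff (isIrred_neg_Jmat hirr hx)).mp hM
  obtain ⟨i₁, hi₁⟩ := Function.ne_iff.mp hIne
  have hmem : ∀ t : ℝ, 1 < t → t • x ∈ Dset Y Vs := fun t ht => by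
    have htx : ∀ i, 0 < (t • x) i := fun i => mul_pos (by linarith) (hx i)
    have hZt := isZmat_neg_Jmat (Vs := Vs) hZ fun i => (htx i).le
    have hirrt := isIrred_neg_Jmat (Vs := Vs) hirr htx
    have hJtu : ∀ i, (-(Jmat Y Vs (t • x)) *ᵥ u) i =
        t * (-(Jmat Y Vs x) *ᵥ u) i + (t - 1) * ((Y *ᵥ Vs) i * u i) := fun i => by
      simp only [neg_Jmat_smul, add_mulVec, smul_mulVec, Pi.add_apply, Pi.smul_apply,
        smul_eq_mul, mulVec_diagonal]
    have hnonneg : ∀ i, 0 ≤ (-(Jmat Y Vs (t • x)) *ᵥ u) i := fun i => by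
      rw [hJtu]
      exact add_nonneg (mul_nonneg (by linarith) (hJu i))
        (mul_nonneg (by linarith) (mul_nonneg (hInn i) (hu i).le))
    have hne : -(Jmat Y Vs (t • x)) *ᵥ u ≠ 0 := fun h => by
      have h₁ := congrFun h i₁
      rw [hJtu, Pi.zero_apply] at h₁
      have := mul_pos (sub_pos.2 ht) (mul_pos ((hInn i₁).lt_of_ne' hi₁) (hu i₁))
      nlinarith [hJu i₁]
    have hdet := hZt.det_ne_zero hirrt hu hnonneg hne
    exact mem_Dset_iff.mpr ⟨htx, hdet, hZt.inv_apply_pos hirrt hu hnonneg hdet⟩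
  have hlim : Tendsto (fun t : ℝ => t • x) (𝓝[>] 1) (𝓝 x) := by
    simpa using (tendsto_nhdsWithin_of_tendsto_nhds (tendsto_id (x := 𝓝 (1 : ℝ)))).smul_const x
  exact mem_closure_of_tendsto hlim (eventually_nhdsWithin_of_forall hmem)

theorem mem_Dset_of_isMmat [Nonempty (Fin n)] (hZ : IsZmat Y) (hirr : IsIrred Y)
    {x : Fin n → ℝ} (hx : ∀ i, 0 < x i) (hM : IsMmat (-(Jmat Y Vs x)))
    (hdet : (-(Jmat Y Vs x)).det ≠ 0) : x ∈ Dset Y Vs := by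
  have hZx := isZmat_neg_Jmat (Vs := Vs) hZ fun i => (hx i).le
  have hirrx := isIrred_neg_Jmat (Vs := Vs) hirr hx
  obtain ⟨u, hu, hJu⟩ := (hZx.isMmat_iff hirrx).mp hM
  exact mem_Dset_iff.mpr ⟨hx, hdet, hZx.inv_apply_pos hirrx hu hJu hdet⟩

end StableSet

theorem stmt_9_general (n : ℕ)
    (Y : Matrix (Fin n) (Fin n) ℝ)
    (hZ : IsZmat Y)
    (hirr : IsIrred Y)
    (Vs : Fin n → ℝ)
    (hInn : ∀ i, 0 ≤ (Y *ᵥ Vs) i) (hIne : Y *ᵥ Vs ≠ 0) :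
    closure (Dset Y Vs) = {x | (∀ i, 0 < x i) ∧ IsMmat (-(Jmat Y Vs x))} ∧
    frontier (Dset Y Vs) =
      {x | (∀ i, 0 < x i) ∧ IsMmat (-(Jmat Y Vs x)) ∧ (-(Jmat Y Vs x)).det = 0} := by
  obtain ⟨i₁, -⟩ := Function.ne_iff.mp hIne
  have : Nonempty (Fin n) := ⟨i₁⟩
  have hclosure : closure (Dset Y Vs) = {x | (∀ i, 0 < x i) ∧ IsMmat (-(Jmat Y Vs x))} :=
    (closure_Dset_subset hZ hirr hInn hIne).antisymm (subset_closure_Dset hZ hirr hInn hIne)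
  refine ⟨hclosure, ?_⟩
  rw [(isOpen_Dset hZ hirr).frontier_eq, hclosure]
  ext x
  simp only [Set.mem_sdiff, mem_ofPred_eq]
  exact ⟨fun ⟨⟨hx, hM⟩, hD⟩ => ⟨hx, hM, by_contra (hD ∘ mem_Dset_of_isMmat hZ hirr hx hM)⟩,
    fun ⟨hx, hM, hdet⟩ => ⟨⟨hx, hM⟩, fun hD => (mem_Dset_iff.mp hD).2.1 hdet⟩⟩

theorem stmt_9 (n : ℕ) (hn : 1 ≤ n)
    (Y : Matrix (Fin n) (Fin n) ℝ)
    (hPD : Y.PosDef)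
    (hZ : IsZmat Y)
    (hirr : IsIrred Y)
    (Vs : Fin n → ℝ) (hVs : ∀ i, 0 < Vs i)
    (hInn : ∀ i, 0 ≤ (Y *ᵥ Vs) i) (hIne : Y *ᵥ Vs ≠ 0) :
    closure (Dset Y Vs) = {x | (∀ i, 0 < x i) ∧ IsMmat (-(Jmat Y Vs x))} ∧
    frontier (Dset Y Vs) =
      {x | (∀ i, 0 < x i) ∧ IsMmat (-(Jmat Y Vs x)) ∧ (-(Jmat Y Vs x)).det = 0} :=
  stmt_9_general n Y hZ hirr Vs hInn hIne
end
end
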